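/- arXiv:1805.10980 — 10 statements merged into one kernel-verified Lean document; each statement's English description precedes it below -/
import Mathlib

section
/- Let n be a positive integer and let F be a family of subsets of {1,…,n} such that for any two distinct sets A, B ∈ F there exists a unique element i ∈ {1,…,n} with i ∈ A ∩ B. Then the number of sets in F is at most n. -/
open Finset

/-- **de Bruijn–Erdős theorem**: if any two distinct members of a family `F` of subsets of
`{1,…,n}` intersect in exactly one element, then `F` has at most `n` members. -/
theorem stmt_0 (n : ℕ) (hn : 1 ≤ n) (F : Finset (Finset (Fin n)))
    (h : ∀ A ∈ F, ∀ B ∈ F, A ≠ B → ∃! i : Fin n, i ∈ A ∩ B) :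
    F.card ≤ n := by
  classical
  -- pairwise intersections are singletons
  have hinter : ∀ A ∈ F, ∀ B ∈ F, A ≠ B → ((A ∩ B).card = 1) := by
    intro A hA B hB hne
    obtain ⟨i, hi, hu⟩ := h A hA B hB hne
    rw [Finset.card_eq_one]
    exact ⟨i, Finset.eq_singleton_iff_unique_mem.2 ⟨hi, hu⟩⟩
  by_cases hbig : ∀ A ∈ F, 2 ≤ A.card
  · -- linear algebra case
    set v : F → (Fin n → ℝ) := fun A i => if i ∈ (A : Finset (Fin n)) then 1 else 0 with hv
    have hdot : ∀ A B : F, ∑ i, v A i * v B i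
        = (((A : Finset (Fin n)) ∩ (B : Finset (Fin n))).card : ℝ) := by
      intro A B
      have : ∀ i : Fin n, v A i * v B i
          = if i ∈ (A : Finset (Fin n)) ∩ (B : Finset (Fin n)) then (1 : ℝ) else 0 := by
        intro i
        simp only [hv, Finset.mem_inter]
        split_ifs with h1 h2 h3 <;> simp_all
      rw [Finset.sum_congr rfl fun i _ => this i, Finset.sum_boole]
      congr 1
      rw [Finset.filter_mem_eq_inter, Finset.univ_inter]
    have hli : LinearIndependent ℝ v := by
      rw [Fintype.linearIndependent_iff]
      intro g hg
      have hgi : ∀ i : Fin n, ∑ A : F, g A * v A i = 0 := by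
        intro i
        have := congrFun hg i
        simpa [Finset.sum_apply] using this
      have h0 : ∑ A : F, ∑ B : F, g A * g B
          * (((A : Finset (Fin n)) ∩ (B : Finset (Fin n))).card : ℝ) = 0 := by
        have : ∑ A : F, ∑ B : F, g A * g B
            * (((A : Finset (Fin n)) ∩ (B : Finset (Fin n))).card : ℝ)
            = ∑ i : Fin n, (∑ A : F, g A * v A i) * (∑ B : F, g B * v B i) := by
          have step1 : ∑ i : Fin n, (∑ A : F, g A * v A i) * (∑ B : F, g B * v B i)
              = ∑ i : Fin n, ∑ A : F, ∑ B : F, (g A * v A i) * (g B * v B i) :=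
            Finset.sum_congr rfl fun i _ => Finset.sum_mul_sum _ _ _ _
          have step2 : ∑ i : Fin n, ∑ A : F, ∑ B : F, (g A * v A i) * (g B * v B i)
              = ∑ A : F, ∑ B : F, ∑ i : Fin n, (g A * v A i) * (g B * v B i) := by
            rw [Finset.sum_comm]
            exact Finset.sum_congr rfl fun A _ => Finset.sum_comm
          rw [step1, step2]
          refine Finset.sum_congr rfl fun A _ => Finset.sum_congr rfl fun B _ => ?_
          rw [← hdot A B, Finset.mul_sum]
          exact Finset.sum_congr rfl fun i _ => by ring
        rw [this]
        have : ∀ i : Fin n, (∑ A : F, g A * v A i) * (∑ B : F, g B * v B i) = 0 := by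
          intro i; rw [hgi i]; ring
        exact Finset.sum_eq_zero fun i _ => this i
      -- rewrite the quadratic form
      have hsplit : ∑ A : F, ∑ B : F, g A * g B
          * (((A : Finset (Fin n)) ∩ (B : Finset (Fin n))).card : ℝ)
          = (∑ A : F, g A ^ 2 * (((A : Finset (Fin n)).card : ℝ) - 1))
            + (∑ A : F, g A) ^ 2 := by
        have key : ∀ A : F, ∑ B : F, g A * g B
            * ((((A : Finset (Fin n)) ∩ (B : Finset (Fin n))).card : ℝ) - 1)
            = g A ^ 2 * (((A : Finset (Fin n)).card : ℝ) - 1) := by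
          intro A
          rw [Finset.sum_eq_single A]
          · rw [Finset.inter_self]; ring
          · intro B _ hBA
            have hne : (B : Finset (Fin n)) ≠ (A : Finset (Fin n)) := by
              intro hh; exact hBA (Subtype.ext hh)
            rw [hinter A A.2 B B.2 (Ne.symm hne)]
            simp
          · intro hA; exact absurd (Finset.mem_univ A) hA
        have expand : ∀ A : F, ∑ B : F, g A * g B
            * (((A : Finset (Fin n)) ∩ (B : Finset (Fin n))).card : ℝ)
            = (∑ B : F, g A * g B
                * ((((A : Finset (Fin n)) ∩ (B : Finset (Fin n))).card : ℝ) - 1))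
              + ∑ B : F, g A * g B := by
          intro A
          rw [← Finset.sum_add_distrib]
          exact Finset.sum_congr rfl fun B _ => by ring
        calc ∑ A : F, ∑ B : F, g A * g B
              * (((A : Finset (Fin n)) ∩ (B : Finset (Fin n))).card : ℝ)
            = ∑ A : F, (g A ^ 2 * (((A : Finset (Fin n)).card : ℝ) - 1)
                + ∑ B : F, g A * g B) := by
              refine Finset.sum_congr rfl fun A _ => ?_
              rw [expand A, key A]
          _ = (∑ A : F, g A ^ 2 * (((A : Finset (Fin n)).card : ℝ) - 1))
              + (∑ A : F, g A) ^ 2 := by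
              rw [Finset.sum_add_distrib]
              congr 1
              rw [sq, Finset.sum_mul]
              exact Finset.sum_congr rfl fun A _ => by rw [Finset.mul_sum]
      rw [hsplit] at h0
      have hterm : ∀ A : F, (0 : ℝ) ≤ g A ^ 2 * (((A : Finset (Fin n)).card : ℝ) - 1) := by
        intro A
        have h2 : (2 : ℝ) ≤ ((A : Finset (Fin n)).card : ℝ) := by
          exact_mod_cast hbig A A.2
        nlinarith [sq_nonneg (g A)]
      have hsum0 : ∑ A : F, g A ^ 2 * (((A : Finset (Fin n)).card : ℝ) - 1) = 0 := by
        have h1 : (0 : ℝ) ≤ ∑ A : F, g A ^ 2 * (((A : Finset (Fin n)).card : ℝ) - 1) :=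
          Finset.sum_nonneg fun A _ => hterm A
        nlinarith [sq_nonneg (∑ A : F, g A)]
      intro A
      have := (Finset.sum_eq_zero_iff_of_nonneg fun A _ => hterm A).1 hsum0 A (Finset.mem_univ A)
      have h2 : (2 : ℝ) ≤ ((A : Finset (Fin n)).card : ℝ) := by exact_mod_cast hbig A A.2
      nlinarith [sq_nonneg (g A)]
    have := hli.fintype_card_le_finrank
    simpa [Module.finrank_fin_fun] using this
  · -- combinatorial case: some set has at most one element
    push_neg at hbig
    obtain ⟨A0, hA0F, hA0⟩ := hbig
    interval_cases hc : A0.card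
    · -- A0 = ∅ : F = {A0}
      have hA0e : A0 = ∅ := Finset.card_eq_zero.1 hc
      have : F ⊆ {A0} := by
        intro B hB
        rw [Finset.mem_singleton]
        by_contra hne
        obtain ⟨i, hi, _⟩ := h A0 hA0F B hB (fun hh => hne hh.symm)
        rw [hA0e] at hi
        simp at hi
      calc F.card ≤ ({A0} : Finset (Finset (Fin n))).card := Finset.card_le_card this
        _ = 1 := Finset.card_singleton _
        _ ≤ n := hn
    · -- A0 = {x}
      obtain ⟨x, hx⟩ := Finset.card_eq_one.1 hc
      have hxmem : ∀ B ∈ F, B ≠ A0 → x ∈ B := by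
        intro B hB hne
        obtain ⟨i, hi, _⟩ := h A0 hA0F B hB (fun hh => hne hh.symm)
        rw [hx] at hi
        rw [Finset.mem_inter, Finset.mem_singleton] at hi
        rw [← hi.1]; exact hi.2
      have hsing : ∀ B ∈ F, ∀ C ∈ F, B ≠ A0 → C ≠ A0 → B ≠ C →
          ∀ y, y ∈ B ∩ C → y = x := by
        intro B hB C hC hBne hCne hBC y hy
        obtain ⟨i, hi, hu⟩ := h B hB C hC hBC
        have hxBC : x ∈ B ∩ C :=
          Finset.mem_inter.2 ⟨hxmem B hB hBne, hxmem C hC hCne⟩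
        rw [hu y hy, hu x hxBC]
      set f : Finset (Fin n) → Fin n := fun B => (B.erase x).min.getD x with hf
      have hfmem : ∀ B ∈ F, B ≠ A0 → f B ∈ B.erase x := by
        intro B hB hne
        have hxB := hxmem B hB hne
        have hne' : (B.erase x).Nonempty := by
          have : ∃ y ∈ B, y ≠ x := by
            by_contra hcon
            push_neg at hcon
            apply hne
            rw [hx]
            refine Finset.Subset.antisymm (fun y hy => ?_) (Finset.singleton_subset_iff.2 hxB)
            rw [Finset.mem_singleton]
            exact hcon y hy
          obtain ⟨y, hyB, hyx⟩ := this
          exact ⟨y, Finset.mem_erase.2 ⟨hyx, hyB⟩⟩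
        obtain ⟨a, ha⟩ := Finset.min_of_nonempty hne'
        have haB : a ∈ B.erase x := Finset.mem_of_min ha
        simp only [hf, ha, Option.getD_some]
        exact haB
      have hfA0 : f A0 = x := by
        simp only [hf, hx, Finset.erase_singleton]
        rfl
      have hinj : Set.InjOn f ↑F := by
        intro B hB C hC hfe
        simp only [Finset.mem_coe] at hB hC
        by_contra hBC
        rcases eq_or_ne B A0 with hB0 | hB0
        · rcases eq_or_ne C A0 with hC0 | hC0
          · exact hBC (hB0.trans hC0.symm)
          · have := hfmem C hC hC0
            rw [Finset.mem_erase] at this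
            exact this.1 (hfe ▸ hB0 ▸ hfA0)
        · rcases eq_or_ne C A0 with hC0 | hC0
          · have := hfmem B hB hB0
            rw [Finset.mem_erase] at this
            exact this.1 (hfe.symm ▸ hC0 ▸ hfA0)
          · have hfB := hfmem B hB hB0
            have hfC := hfmem C hC hC0
            rw [Finset.mem_erase] at hfB hfC
            have hmem : f B ∈ B ∩ C :=
              Finset.mem_inter.2 ⟨hfB.2, hfe ▸ hfC.2⟩
            exact hfB.1 (hsing B hB C hC hB0 hC0 hBC (f B) hmem)
      calc F.card ≤ (Finset.univ : Finset (Fin n)).card :=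
            Finset.card_le_card_of_injOn f (fun _ _ => Finset.mem_univ _) hinj
        _ = n := by simp
end

section
/- Let n ≥ 2, let α ∈ [0,1] be fixed, and let f_1,…,f_{n-2} : [0,1] → [0,1] be injective measurable piecewise monotone functions. Then the set A = {(x, f_1(x), …, f_{n-2}(x), α) : x ∈ [0,1]} ⊆ ℝ^n (Euclidean space) has Hausdorff dimension at most 1. -/
open MeasureTheory

/-- An injective function `f : [0,1] → [0,1]` is piecewise monotone if there is an at most
countable partition of `[0,1]` into pairwise disjoint measurable sets on each of which `f`
is strictly monotone. -/
def PiecewiseMonotone (f : ℝ → ℝ) : Prop :=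
  ∃ S : ℕ → Set ℝ,
    (∀ j, MeasurableSet (S j)) ∧
    Pairwise (Function.onFun Disjoint S) ∧
    (⋃ j, S j) = Set.Icc 0 1 ∧
    ∀ j, StrictMonoOn f (S j) ∨ StrictAntiOn f (S j)

/-!
On each cell of the common refinement of the monotonicity partitions of the coordinates, flip
the sign of the decreasing coordinates and add them up to a single monotone function `g`. Every
coordinate increment is then bounded by the increment of `g`, so the curve factors through `g`
via a `1`-Lipschitz map and the image of the cell has dimension at most `dimH ℝ = 1`. There are
countably many cells, since each is indexed by a choice of piece for each of finitely many
coordinates.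
-/

open Set

def PiecewiseMonotoneOn (ψ : ℝ → ℝ) (s : Set ℝ) : Prop :=
  ∃ S : ℕ → Set ℝ, s ⊆ ⋃ j, S j ∧ ∀ j, MonotoneOn ψ (S j) ∨ AntitoneOn ψ (S j)

lemma Monotone.piecewiseMonotoneOn {ψ : ℝ → ℝ} (hψ : Monotone ψ) (s : Set ℝ) :
    PiecewiseMonotoneOn ψ s :=
  ⟨fun _ => univ, fun x _ => mem_iUnion.2 ⟨0, mem_univ x⟩, fun _ => Or.inl (hψ.monotoneOn _)⟩

lemma PiecewiseMonotone.piecewiseMonotoneOn {f : ℝ → ℝ} (hf : PiecewiseMonotone f) :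
    PiecewiseMonotoneOn f (Icc 0 1) := by
  obtain ⟨S, -, -, hcover, hmono⟩ := hf
  exact ⟨S, hcover.ge, fun j => (hmono j).imp StrictMonoOn.monotoneOn StrictAntiOn.antitoneOn⟩

lemma exists_abs_eq_one_monotoneOn_mul {α : Type*} [Preorder α] {ψ : α → ℝ} {s : Set α}
    (h : MonotoneOn ψ s ∨ AntitoneOn ψ s) :
    ∃ ε : ℝ, |ε| = 1 ∧ MonotoneOn (fun x => ε * ψ x) s := by
  rcases h with h | h
  · exact ⟨1, abs_one, by simpa using h⟩
  · exact ⟨-1, by simp, by simpa using h.neg⟩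

lemma abs_sub_le_abs_sum_sub_of_monotoneOn {α ι : Type*} [LinearOrder α] {s : Set α}
    {t : Finset ι} {g : ι → α → ℝ} (hg : ∀ j ∈ t, MonotoneOn (g j) s) {i : ι} (hi : i ∈ t)
    {x y : α} (hx : x ∈ s) (hy : y ∈ s) :
    |g i x - g i y| ≤ |∑ j ∈ t, g j x - ∑ j ∈ t, g j y| := by
  wlog hxy : x ≤ y generalizing x y
  · rw [abs_sub_comm, abs_sub_comm (∑ j ∈ t, g j x)]
    exact this hy hx (le_of_not_ge hxy)
  have hinc : ∀ j ∈ t, 0 ≤ g j y - g j x := fun j hj => sub_nonneg.2 (hg j hj hx hy hxy)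
  rw [abs_sub_comm, abs_sub_comm (∑ j ∈ t, g j x), ← Finset.sum_sub_distrib,
    abs_of_nonneg (hinc i hi), abs_of_nonneg (Finset.sum_nonneg hinc)]
  exact Finset.single_le_sum hinc hi

/-- `F` factors through `g` on `s` by a Lipschitz map. -/
lemma dimH_image_le_of_dist_le_mul {X Y Z : Type*} [Nonempty X] [MetricSpace Y] [MetricSpace Z]
    {F : X → Y} {g : X → Z} {s : Set X} {K : NNReal}
    (h : ∀ x ∈ s, ∀ y ∈ s, dist (F x) (F y) ≤ K * dist (g x) (g y)) :
    dimH (F '' s) ≤ dimH (g '' s) := by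
  set g' := Function.invFunOn g s
  have hg's : ∀ z ∈ g '' s, g' z ∈ s ∧ g (g' z) = z := fun z hz =>
    ⟨Function.invFunOn_mem hz, Function.invFunOn_eq hz⟩
  have hlip : LipschitzOnWith K (F ∘ g') (g '' s) := by
    refine LipschitzOnWith.of_dist_le_mul fun a ha b hb => ?_
    obtain ⟨ha's, hga⟩ := hg's a ha
    obtain ⟨hb's, hgb⟩ := hg's b hb
    simpa only [Function.comp_apply, hga, hgb] using h _ ha's _ hb's
  have hfactor : F '' s ⊆ (F ∘ g') '' (g '' s) := by
    rintro _ ⟨x, hx, rfl⟩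
    obtain ⟨hx's, hgx⟩ := hg's (g x) (mem_image_of_mem g hx)
    refine ⟨g x, mem_image_of_mem g hx, dist_le_zero.1 ?_⟩
    simpa [hgx] using h _ hx's _ hx
  exact (dimH_mono hfactor).trans hlip.dimH_image_le

lemma dimH_image_le_one_of_monotoneOn_or_antitoneOn {ι : Type*} [Fintype ι]
    {φ : ℝ → ι → ℝ} {s : Set ℝ}
    (h : ∀ i, MonotoneOn (fun x => φ x i) s ∨ AntitoneOn (fun x => φ x i) s) :
    dimH (φ '' s) ≤ 1 := by
  choose ε hε hmono using fun i => exists_abs_eq_one_monotoneOn_mul (h i)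
  have hdist : ∀ x ∈ s, ∀ y ∈ s,
      dist (φ x) (φ y) ≤ (1 : NNReal) * dist (∑ i, ε i * φ x i) (∑ i, ε i * φ y i) := by
    intro x hx y hy
    rw [NNReal.coe_one, one_mul]
    refine (dist_pi_le_iff dist_nonneg).2 fun i => ?_
    calc dist (φ x i) (φ y i) = |ε i * φ x i - ε i * φ y i| := by
          rw [Real.dist_eq, ← mul_sub, abs_mul, hε i, one_mul]
      _ ≤ _ := abs_sub_le_abs_sum_sub_of_monotoneOn (fun j _ => hmono j)
          (Finset.mem_univ i) hx hy
  calc dimH (φ '' s) ≤ dimH ((fun x => ∑ i, ε i * φ x i) '' s) :=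
        dimH_image_le_of_dist_le_mul hdist
    _ ≤ dimH (univ : Set ℝ) := dimH_mono (subset_univ _)
    _ = 1 := Real.dimH_univ

lemma dimH_image_le_one_of_piecewiseMonotoneOn {ι : Type*} [Fintype ι]
    {φ : ℝ → ι → ℝ} {s : Set ℝ} (h : ∀ i, PiecewiseMonotoneOn (fun x => φ x i) s) :
    dimH (φ '' s) ≤ 1 := by
  choose S hcover hmono using h
  have hrefine : s ⊆ ⋃ c : ι → ℕ, ⋂ i, S i (c i) := fun x hx => by
    choose c hc using fun i => mem_iUnion.1 (hcover i hx)
    exact mem_iUnion.2 ⟨c, mem_iInter.2 hc⟩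
  calc dimH (φ '' s) ≤ dimH (⋃ c : ι → ℕ, φ '' ⋂ i, S i (c i)) := by
        rw [← image_iUnion]
        exact dimH_mono (image_mono hrefine)
    _ ≤ 1 := by
      rw [dimH_iUnion]
      refine iSup_le fun c => dimH_image_le_one_of_monotoneOn_or_antitoneOn fun i => ?_
      exact (hmono i (c i)).imp (·.mono (iInter_subset _ i)) (·.mono (iInter_subset _ i))

theorem stmt_2_general (n : ℕ) (α : ℝ)
    (f : ℕ → ℝ → ℝ)
    (hpm : ∀ i, i < n - 2 → PiecewiseMonotone (f i)) :
    dimH ((fun x : ℝ => (WithLp.toLp 2 (fun i : Fin n =>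
        if (i : ℕ) = 0 then x
        else if (i : ℕ) = n - 1 then α
        else f ((i : ℕ) - 1) x) : EuclideanSpace ℝ (Fin n))) '' Set.Icc 0 1)
      ≤ 1 := by
  set φ : ℝ → Fin n → ℝ := fun x i =>
    if (i : ℕ) = 0 then x else if (i : ℕ) = n - 1 then α else f ((i : ℕ) - 1) x
  have hφ : ∀ i, PiecewiseMonotoneOn (fun x => φ x i) (Icc 0 1) := by
    intro i
    by_cases h0 : (i : ℕ) = 0
    · simp only [φ, if_pos h0]
      exact monotone_id.piecewiseMonotoneOn _
    by_cases hlast : (i : ℕ) = n - 1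
    · simp only [φ, if_neg h0, if_pos hlast]
      exact monotone_const.piecewiseMonotoneOn _
    simp only [φ, if_neg h0, if_neg hlast]
    exact (hpm _ (by omega)).piecewiseMonotoneOn
  calc _ = dimH (WithLp.toLp 2 '' (φ '' Icc 0 1)) := by rw [image_image]
    _ ≤ dimH (φ '' Icc 0 1) := (PiLp.lipschitzWith_toLp 2 _).dimH_image_le _
    _ ≤ 1 := dimH_image_le_one_of_piecewiseMonotoneOn hφ

/-- A piecewise monotone `n`-de Bruijn–Erdős set
`A = {(x, f₁(x), …, f_{n-2}(x), α) : x ∈ [0,1]} ⊆ ℝⁿ` has Hausdorff dimension at most `1`. -/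
theorem stmt_2 (n : ℕ) (hn : 2 ≤ n) (α : ℝ) (hα : α ∈ Set.Icc (0 : ℝ) 1)
    (f : ℕ → ℝ → ℝ)
    (hmaps : ∀ i, i < n - 2 → Set.MapsTo (f i) (Set.Icc 0 1) (Set.Icc 0 1))
    (hinj : ∀ i, i < n - 2 → Set.InjOn (f i) (Set.Icc 0 1))
    (hmeas : ∀ i, i < n - 2 → Measurable ((Set.Icc (0 : ℝ) 1).restrict (f i)))
    (hpm : ∀ i, i < n - 2 → PiecewiseMonotone (f i)) :
    dimH ((fun x : ℝ => (WithLp.toLp 2 (fun i : Fin n =>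
        if (i : ℕ) = 0 then x
        else if (i : ℕ) = n - 1 then α
        else f ((i : ℕ) - 1) x) : EuclideanSpace ℝ (Fin n))) '' Set.Icc 0 1)
      ≤ 1 :=
  stmt_2_general n α f hpm
end

section
/- Let A be a subset of the real line and suppose that {V_i}_i and {W_j}_j are at most countable left-right ordered partitions of A. Then {V_i ∩ W_j}_{i,j} is an at most countable left-right ordered partition of A, and Σ_{i,j} diam(V_i ∩ W_j) ≤ min{ Σ_i diam(V_i), Σ_j diam(W_j) }. -/
open MeasureTheory

/-- An (at most countable) indexed family `V` is a left-right ordered partition of `A ⊆ ℝ`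
if its members are pairwise disjoint, their union is `A`, and any two distinct members are
comparable: one lies entirely to the left of the other. -/
def LROrderedPartition {ι : Type*} (V : ι → Set ℝ) (A : Set ℝ) : Prop :=
  (⋃ i, V i) = A ∧
  Pairwise (Function.onFun Disjoint V) ∧
  ∀ i j, i ≠ j →
    (∀ x ∈ V i, ∀ y ∈ V j, x ≤ y) ∨ (∀ x ∈ V i, ∀ y ∈ V j, y ≤ x)

/-! If `S` lies to the left of `T`, then `diam S + diam T ≤ diam (S ∪ T)`, witnessed by the
leftmost point of the left pair and the rightmost point of the right pair. Peeling off the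
rightmost member, finitely many disjoint left-right ordered sets thus have total diameter at most
that of their union, and so does a countable family through its finite partial sums. For fixed
`i` the sets `Vᵢ ∩ Wⱼ` form such a family inside `Vᵢ`, so summing over `j` and then over `i`
bounds the double sum by `Σᵢ diam Vᵢ`; symmetrically by `Σⱼ diam Wⱼ`. -/

open Set Metric Function

lemma dist_add_dist_le_dist_min_max {a b c d : ℝ} (h : max a b ≤ min c d) :
    dist a b + dist c d ≤ dist (min a b) (max c d) := by
  have hle : min a b ≤ max c d := (min_le_max.trans h).trans min_le_max
  rw [dist_comm (min a b), Real.dist_eq, Real.dist_eq, Real.dist_eq, ← max_sub_min_eq_abs',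
    ← max_sub_min_eq_abs', abs_of_nonneg (sub_nonneg.2 hle)]
  linarith

lemma ediam_add_ediam_le_ediam_union {S T : Set ℝ} (h : ∀ x ∈ S, ∀ y ∈ T, x ≤ y) :
    ediam S + ediam T ≤ ediam (S ∪ T) := by
  rcases S.eq_empty_or_nonempty with rfl | hS
  · simp
  rcases T.eq_empty_or_nonempty with rfl | hT
  · simp
  refine ENNReal.biSup_add_biSup_le hS hT fun s hs t ht => ?_
  refine ENNReal.biSup_add_biSup_le hS hT fun s' hs' t' ht' => ?_
  have hmin : min s s' ∈ S ∪ T := Or.inl (by rcases min_choice s s' with h | h <;> rwa [h])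
  have hmax : max t t' ∈ S ∪ T := Or.inr (by rcases max_choice t t' with h | h <;> rwa [h])
  calc edist s s' + edist t t' ≤ edist (min s s') (max t t') := by
        simp only [edist_dist, ← ENNReal.ofReal_add dist_nonneg dist_nonneg]
        exact ENNReal.ofReal_le_ofReal <| dist_add_dist_le_dist_min_max <|
          max_le (le_min (h s hs t ht) (h s hs t' ht')) (le_min (h s' hs' t ht) (h s' hs' t' ht'))
    _ ≤ ediam (S ∪ T) := edist_le_ediam_of_mem hmin hmax

lemma sum_ediam_le_ediam_biUnion {ι : Type*} {S : ι → Set ℝ} (hd : Pairwise (Disjoint on S))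
    (ho : ∀ i j, i ≠ j →
      (∀ x ∈ S i, ∀ y ∈ S j, x ≤ y) ∨ (∀ x ∈ S i, ∀ y ∈ S j, y ≤ x))
    (F : Finset ι) :
    ∑ i ∈ F, ediam (S i) ≤ ediam (⋃ i ∈ F, S i) := by
  classical
  -- Peel off the member whose chosen point is largest: it lies to the right of all the others.
  induction F using Finset.induction_on_max_value (fun i => Classical.epsilon (· ∈ S i)) with
  | empty => simp
  | insert a F haF hmax ih =>
    have hleft : ∀ x ∈ ⋃ i ∈ F, S i, ∀ y ∈ S a, x ≤ y := by
      simp only [mem_iUnion₂]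
      rintro x ⟨i, hi, hx⟩ y hy
      have hia : i ≠ a := ne_of_mem_of_not_mem hi haF
      refine (ho i a hia).resolve_right (fun hright => ?_) x hx y hy
      have hi_mem := Classical.epsilon_spec (p := (· ∈ S i)) ⟨x, hx⟩
      have ha_mem := Classical.epsilon_spec (p := (· ∈ S a)) ⟨y, hy⟩
      have heq := le_antisymm (hmax i hi) (hright _ hi_mem _ ha_mem)
      exact disjoint_left.1 (hd hia) hi_mem (heq ▸ ha_mem)
    calc ∑ i ∈ insert a F, ediam (S i) = ∑ i ∈ F, ediam (S i) + ediam (S a) := by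
          rw [Finset.sum_insert haF, add_comm]
      _ ≤ ediam (⋃ i ∈ F, S i) + ediam (S a) := by gcongr
      _ ≤ ediam ((⋃ i ∈ F, S i) ∪ S a) := ediam_add_ediam_le_ediam_union hleft
      _ = ediam (⋃ i ∈ insert a F, S i) := by rw [Finset.set_biUnion_insert, union_comm]

lemma lr_comparable_of_subset {S S' T T' : Set ℝ} (hS : S ⊆ S') (hT : T ⊆ T')
    (h : (∀ x ∈ S', ∀ y ∈ T', x ≤ y) ∨ (∀ x ∈ S', ∀ y ∈ T', y ≤ x)) :
    (∀ x ∈ S, ∀ y ∈ T, x ≤ y) ∨ (∀ x ∈ S, ∀ y ∈ T, y ≤ x) :=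
  h.imp (fun h x hx y hy => h x (hS hx) y (hT hy)) (fun h x hx y hy => h x (hS hx) y (hT hy))

namespace LROrderedPartition

variable {ι κ : Type*} {V : ι → Set ℝ} {W : κ → Set ℝ} {A B : Set ℝ}

lemma tsum_ediam_le (hV : LROrderedPartition V A) : ∑' i, ediam (V i) ≤ ediam A := by
  obtain ⟨rfl, hd, ho⟩ := hV
  rw [ENNReal.tsum_eq_iSup_sum]
  exact iSup_le fun F =>
    (sum_ediam_le_ediam_biUnion hd ho F).trans (ediam_mono (iUnion₂_subset_iUnion _ _))

lemma inter_left (hW : LROrderedPartition W A) (B : Set ℝ) :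
    LROrderedPartition (fun j => B ∩ W j) (B ∩ A) := by
  obtain ⟨hU, hd, ho⟩ := hW
  refine ⟨by rw [← inter_iUnion, hU], fun j k hjk => ?_, fun j k hjk => ?_⟩
  · exact (hd hjk).mono inter_subset_right inter_subset_right
  · exact lr_comparable_of_subset inter_subset_right inter_subset_right (ho j k hjk)

lemma inter (hV : LROrderedPartition V A) (hW : LROrderedPartition W B) :
    LROrderedPartition (fun p : ι × κ => V p.1 ∩ W p.2) (A ∩ B) := by
  obtain ⟨hVU, hVd, hVo⟩ := hV
  obtain ⟨hWU, hWd, hWo⟩ := hW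
  refine ⟨by rw [← hVU, ← hWU, iUnion_inter_iUnion, iUnion_prod'], fun p q hpq => ?_,
    fun p q hpq => ?_⟩
  · rcases not_and_or.1 (mt Prod.ext_iff.2 hpq) with h | h
    · exact (hVd h).mono inter_subset_left inter_subset_left
    · exact (hWd h).mono inter_subset_right inter_subset_right
  · rcases not_and_or.1 (mt Prod.ext_iff.2 hpq) with h | h
    · exact lr_comparable_of_subset inter_subset_left inter_subset_left (hVo _ _ h)
    · exact lr_comparable_of_subset inter_subset_right inter_subset_right (hWo _ _ h)

end LROrderedPartition

/-- If `{Vᵢ}` and `{Wⱼ}` are at most countable left-right ordered partitions of `A ⊆ ℝ`,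
then `{Vᵢ ∩ Wⱼ}` is one as well, and
`Σ_{i,j} diam (Vᵢ ∩ Wⱼ) ≤ min (Σᵢ diam Vᵢ) (Σⱼ diam Wⱼ)`. -/
theorem stmt_5 (A : Set ℝ) (V W : ℕ → Set ℝ)
    (hV : LROrderedPartition V A) (hW : LROrderedPartition W A) :
    LROrderedPartition (fun p : ℕ × ℕ => V p.1 ∩ W p.2) A ∧
    ∑' p : ℕ × ℕ, EMetric.diam (V p.1 ∩ W p.2) ≤
      min (∑' i, EMetric.diam (V i)) (∑' j, EMetric.diam (W j)) := by
  refine ⟨inter_self A ▸ hV.inter hW, ?_⟩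
  change ∑' p : ℕ × ℕ, ediam (V p.1 ∩ W p.2) ≤ min (∑' i, ediam (V i)) (∑' j, ediam (W j))
  refine le_min ?_ ?_
  · rw [ENNReal.tsum_prod (f := fun i j => ediam (V i ∩ W j))]
    exact ENNReal.tsum_le_tsum fun i =>
      (hW.inter_left (V i)).tsum_ediam_le.trans (ediam_mono inter_subset_left)
  · rw [ENNReal.tsum_prod (f := fun i j => ediam (V i ∩ W j)), ENNReal.tsum_comm]
    refine ENNReal.tsum_le_tsum fun j => ?_
    simp_rw [inter_comm (V _)]
    exact (hV.inter_left (W j)).tsum_ediam_le.trans (ediam_mono inter_subset_left)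
end

section
/- Let D ⊆ ℝ and suppose f_0, f_1, …, f_m are strictly increasing real-valued functions defined on D. Then H^1({ Σ_{k=0}^m f_k(x) : x ∈ D }) ≤ Σ_{k=0}^m H^1(f_k(D)), where H^1 denotes the 1-dimensional Hausdorff measure on ℝ. -/
/-!
Write `F = (g + h)(D)` for increasing `g, h` with `g + h` strictly increasing. Reparametrised by
the value `v = g x + h x ∈ F`, the summands become `p` and `id - p` for a function `p` on `F` with
both `p` and `id - p` increasing. When `F` is bounded, `p` extends to `P : ℝ → ℝ` with `P` and
`id - P` increasing and surjective. Then `P` is `1`-Lipschitz, Lebesgue measure is the sum of the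
Stieltjes measures of `P` and `id - P`, and each of these is mapped to Lebesgue measure by its
function, so `vol F ≤ vol (P F) + vol ((id - P) F)`; exhausting `F` by bounded pieces removes the
boundedness. Induction on the number of summands finishes the proof.
-/

open MeasureTheory Set Filter Function

theorem exists_preimage_Iic_eq_Iic {f : ℝ → ℝ} (hmono : Monotone f) (hc : Continuous f)
    (hs : Surjective f) (y : ℝ) : ∃ c, f ⁻¹' Iic y = Iic c ∧ f c = y := by
  set s := f ⁻¹' Iic y
  obtain ⟨x, hx⟩ := hs y
  have hxs : x ∈ s := by simp [s, hx]
  obtain ⟨z, hz⟩ := hs (y + 1)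
  have hbdd : BddAbove s := ⟨z, fun w (hw : f w ≤ y) => by
    by_contra! hzw
    linarith [hmono hzw.le]⟩
  have hcs : sSup s ∈ s := (isClosed_Iic.preimage hc).csSup_mem ⟨x, hxs⟩ hbdd
  refine ⟨sSup s, Subset.antisymm (fun w hw => le_csSup hbdd hw)
    (fun w hw => (hmono hw).trans hcs), le_antisymm hcs ?_⟩
  exact hx ▸ hmono (le_csSup hbdd hxs)

namespace StieltjesFunction

variable (R : StieltjesFunction ℝ)

theorem map_measure_eq_volume (hc : Continuous R) (hs : Surjective R) :
    R.measure.map R = volume := by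
  refine (Measure.ext_of_Ioc _ _ fun a b _ => ?_).symm
  obtain ⟨c, hc_pre, rfl⟩ := exists_preimage_Iic_eq_Iic R.mono hc hs a
  obtain ⟨d, hd_pre, rfl⟩ := exists_preimage_Iic_eq_Iic R.mono hc hs b
  have hpre : R ⁻¹' Ioc (R c) (R d) = Ioc c d := by
    rw [← Iic_sdiff_Iic, preimage_sdiff, hc_pre, hd_pre, Iic_sdiff_Iic]
  rw [Measure.map_apply hc.measurable measurableSet_Ioc, hpre, R.measure_Ioc, Real.volume_Ioc]

theorem measure_le_volume_image (hc : Continuous R) (hs : Surjective R) (s : Set ℝ) :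
    R.measure s ≤ volume (R '' s) := by
  set T := toMeasurable volume (R '' s)
  calc R.measure s ≤ R.measure (R ⁻¹' T) :=
        measure_mono fun v hv => subset_toMeasurable _ _ (mem_image_of_mem _ hv)
    _ = volume T := by
        rw [← Measure.map_apply hc.measurable (measurableSet_toMeasurable _ _),
          R.map_measure_eq_volume hc hs]
    _ = volume (R '' s) := measure_toMeasurable _

end StieltjesFunction

theorem lipschitzWith_one_of_monotone_of_monotone_sub {P : ℝ → ℝ} (hP : Monotone P)
    (hQ : Monotone fun v => v - P v) : LipschitzWith 1 P := by
  refine LipschitzWith.of_le_add_mul 1 fun v w => ?_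
  rw [NNReal.coe_one, one_mul, Real.dist_eq]
  rcases le_total v w with h | h
  · linarith [hP h, abs_nonneg (v - w)]
  · linarith [hQ h, le_abs_self (v - w)]

theorem volume_le_image_add_image_of_surjective {P : ℝ → ℝ} (hP : Monotone P)
    (hQ : Monotone fun v => v - P v) (hPs : Surjective P) (hQs : Surjective fun v => v - P v)
    (F : Set ℝ) : volume F ≤ volume (P '' F) + volume ((fun v => v - P v) '' F) := by
  have hPc := (lipschitzWith_one_of_monotone_of_monotone_sub hP hQ).continuous
  have hQc : Continuous fun v => v - P v := continuous_id.sub hPc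
  set SP : StieltjesFunction ℝ := ⟨P, hP, fun _ => hPc.continuousWithinAt⟩
  set SQ : StieltjesFunction ℝ := ⟨_, hQ, fun _ => hQc.continuousWithinAt⟩
  have hsum : SP + SQ = StieltjesFunction.id := by
    ext v
    simp [SP, SQ]
  rw [Real.volume_val, ← hsum, StieltjesFunction.measure_add, Measure.add_apply]
  exact add_le_add (SP.measure_le_volume_image hPc hPs F) (SQ.measure_le_volume_image hQc hQs F)

/-- A one-sided McShane extension. -/
theorem exists_monotone_extension {F : Set ℝ} (hF : F.Nonempty) {p : ℝ → ℝ}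
    (hp : MonotoneOn p F) (hq : MonotoneOn (fun v => v - p v) F) :
    ∃ P : ℝ → ℝ, EqOn P p F ∧ Monotone P ∧ Monotone fun v => v - P v := by
  obtain ⟨v₀, hv₀⟩ := hF
  have : Nonempty F := ⟨⟨v₀, hv₀⟩⟩
  have hbdd (v : ℝ) : BddAbove (range fun w : F => p w - max ((w : ℝ) - v) 0) := by
    refine ⟨p v₀ + |v - v₀|, ?_⟩
    rintro _ ⟨⟨w, hw⟩, rfl⟩
    rcases le_total w v₀ with h | h
    · linarith [hp hw hv₀ h, le_max_right (w - v) 0, abs_nonneg (v - v₀)]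
    · linarith [hq hv₀ hw h, le_max_left (w - v) 0, le_abs_self (v - v₀)]
  refine ⟨fun v => ⨆ w : F, p w - max ((w : ℝ) - v) 0, fun v hv => ?_, fun v v' h => ?_,
    fun v v' h => ?_⟩
  · refine le_antisymm (ciSup_le fun ⟨w, hw⟩ => ?_) ?_
    · rcases le_total w v with h | h
      · linarith [hp hw hv h, le_max_right (w - v) 0]
      · linarith [hq hv hw h, le_max_left (w - v) 0]
    · simpa using le_ciSup (hbdd v) ⟨v, hv⟩
  · exact ciSup_mono (hbdd v') fun w => by
      linarith [max_le_max_right 0 (show (w : ℝ) - v' ≤ w - v by linarith)]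
  · suffices (⨆ w : F, p w - max ((w : ℝ) - v') 0) ≤
        (⨆ w : F, p w - max ((w : ℝ) - v) 0) + (v' - v) by
      simp only; linarith
    refine ciSup_le fun w => ?_
    have : max ((w : ℝ) - v) 0 ≤ max ((w : ℝ) - v') 0 + (v' - v) :=
      max_le (by linarith [le_max_left ((w : ℝ) - v') 0])
        (by linarith [le_max_right ((w : ℝ) - v') 0])
    linarith [le_ciSup (hbdd v) w]

/-- The slope `1 / 2` outside `[a, b]` keeps both `clampExtend a b G` and `id - clampExtend a b G`
unbounded in both directions. -/
noncomputable def clampExtend (a b : ℝ) (G : ℝ → ℝ) (v : ℝ) : ℝ :=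
  G (max a (min v b)) + (v - max a (min v b)) / 2

section clampExtend

variable {a b : ℝ} {G : ℝ → ℝ}

theorem clampExtend_of_mem {v : ℝ} (hv : v ∈ Icc a b) : clampExtend a b G v = G v := by
  simp [clampExtend, min_eq_left hv.2, max_eq_right hv.1]

theorem sub_clampExtend (v : ℝ) :
    v - clampExtend a b G v = clampExtend a b (fun u => u - G u) v := by
  simp only [clampExtend]
  ring

theorem Monotone.clampExtend (hG : Monotone G) : Monotone (clampExtend a b G) := by
  have hclamp : Monotone fun v : ℝ => max a (min v b) := fun v w h =>
    max_le_max_left a (min_le_min_right b h)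
  have hrest : Monotone fun v : ℝ => v - max a (min v b) := fun v w h => by
    simp only [min_def, max_def]
    split_ifs <;> linarith
  exact (hG.comp hclamp).add (hrest.div_const two_pos.le)

theorem tendsto_clampExtend_atTop (hab : a ≤ b) (hG : Monotone G) :
    Tendsto (clampExtend a b G) atTop atTop := by
  refine tendsto_atTop_add_left_of_le _ (G a) (fun v => hG (le_max_left _ _)) ?_
  refine tendsto_atTop_mono (fun v => ?_)
    ((tendsto_id.atTop_add tendsto_const_nhds).atTop_div_const two_pos :
      Tendsto (fun v : ℝ => (v + -b) / 2) atTop atTop)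
  have : max a (min v b) ≤ b := max_le hab (min_le_right _ _)
  linarith

theorem tendsto_clampExtend_atBot (hab : a ≤ b) (hG : Monotone G) :
    Tendsto (clampExtend a b G) atBot atBot := by
  refine tendsto_atBot_add_left_of_ge _ (G b) (fun v => hG (max_le hab (min_le_right _ _))) ?_
  refine tendsto_atBot_mono (fun v => ?_)
    ((tendsto_id.atBot_add tendsto_const_nhds).atBot_div_const two_pos :
      Tendsto (fun v : ℝ => (v + -a) / 2) atBot atBot)
  have : a ≤ max a (min v b) := le_max_left _ _
  linarith

end clampExtend

theorem volume_le_image_add_image_of_subset_Icc {F : Set ℝ} {a b : ℝ} (hF : F ⊆ Icc a b)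
    {p : ℝ → ℝ} (hp : MonotoneOn p F) (hq : MonotoneOn (fun v => v - p v) F) :
    volume F ≤ volume (p '' F) + volume ((fun v => v - p v) '' F) := by
  rcases F.eq_empty_or_nonempty with rfl | hne
  · simp
  have hab : a ≤ b := (hF hne.some_mem).1.trans (hF hne.some_mem).2
  obtain ⟨P₀, hP₀p, hP₀, hQ₀⟩ := exists_monotone_extension hne hp hq
  set P := clampExtend a b P₀
  have hP : Monotone P := hP₀.clampExtend
  have hQeq : (fun v => v - P v) = clampExtend a b fun u => u - P₀ u := funext sub_clampExtend
  have hQ : Monotone fun v => v - P v := hQeq ▸ hQ₀.clampExtend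
  have hPc := (lipschitzWith_one_of_monotone_of_monotone_sub hP hQ).continuous
  have hPs : Surjective P :=
    hPc.surjective (tendsto_clampExtend_atTop hab hP₀) (tendsto_clampExtend_atBot hab hP₀)
  have hQs : Surjective fun v => v - P v :=
    Continuous.surjective (f := fun v => v - P v) (continuous_id.sub hPc)
      (hQeq ▸ tendsto_clampExtend_atTop hab hQ₀) (hQeq ▸ tendsto_clampExtend_atBot hab hQ₀)
  have hPp : EqOn P p F := fun v hv => (clampExtend_of_mem (hF hv)).trans (hP₀p hv)
  rw [← image_congr hPp, ← image_congr fun v hv => congrArg (v - ·) (hPp hv)]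
  exact volume_le_image_add_image_of_surjective hP hQ hPs hQs F

theorem volume_le_image_add_image {F : Set ℝ} {p : ℝ → ℝ} (hp : MonotoneOn p F)
    (hq : MonotoneOn (fun v => v - p v) F) :
    volume F ≤ volume (p '' F) + volume ((fun v => v - p v) '' F) := by
  set F' : ℕ → Set ℝ := fun n => F ∩ Icc (-n) n
  have hF' : Monotone F' := fun m n h =>
    inter_subset_inter_right _ (Icc_subset_Icc (by simpa using h) (by simpa using h))
  have hUnion : F = ⋃ n, F' n := by
    refine (Subset.antisymm (fun v hv => ?_) (iUnion_subset fun n => inter_subset_left))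
    obtain ⟨n, hn⟩ := exists_nat_ge |v|
    exact mem_iUnion.2 ⟨n, hv, abs_le.1 hn⟩
  conv_lhs => rw [hUnion, hF'.measure_iUnion]
  refine iSup_le fun n => ?_
  have hsub : F' n ⊆ F := inter_subset_left
  calc volume (F' n) ≤ volume (p '' F' n) + volume ((fun v => v - p v) '' F' n) :=
        volume_le_image_add_image_of_subset_Icc inter_subset_right (hp.mono hsub) (hq.mono hsub)
    _ ≤ volume (p '' F) + volume ((fun v => v - p v) '' F) :=
        add_le_add (measure_mono (image_mono hsub)) (measure_mono (image_mono hsub))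

theorem volume_image_add_le {D : Set ℝ} {g h : ℝ → ℝ} (hg : MonotoneOn g D)
    (hh : MonotoneOn h D) (hgh : StrictMonoOn (fun x => g x + h x) D) :
    volume ((fun x => g x + h x) '' D) ≤ volume (g '' D) + volume (h '' D) := by
  set S := fun x => g x + h x
  set φ := invFunOn S D
  have hφ (v : ℝ) (hv : v ∈ S '' D) : φ v ∈ D ∧ S (φ v) = v :=
    invFunOn_pos (by simpa using hv)
  have hφD : MapsTo φ (S '' D) D := fun v hv => (hφ v hv).1
  have hφmono : MonotoneOn φ (S '' D) := fun v hv w hw hvw => by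
    rwa [← hgh.le_iff_le (hφ v hv).1 (hφ w hw).1, (hφ v hv).2, (hφ w hw).2]
  have hq : EqOn (h ∘ φ) (fun v => v - (g ∘ φ) v) (S '' D) := fun v hv =>
    eq_sub_of_add_eq' (hφ v hv).2
  refine (volume_le_image_add_image (hg.comp hφmono hφD) ((hh.comp hφmono hφD).congr hq)).trans
    (add_le_add (measure_mono ?_) (measure_mono ?_))
  · rw [image_comp]
    exact image_mono hφD.image_subset
  · rw [← image_congr hq, image_comp]
    exact image_mono hφD.image_subset

theorem volume_image_sum_le {ι : Type*} (s : Finset ι) {D : Set ℝ} {f : ι → ℝ → ℝ}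
    (hf : ∀ i ∈ s, StrictMonoOn (f i) D) :
    volume ((fun x => ∑ i ∈ s, f i x) '' D) ≤ ∑ i ∈ s, volume (f i '' D) := by
  classical
  induction s using Finset.induction_on with
  | empty =>
    simpa using measure_mono_null (image_subset_iff.2 fun _ _ => mem_singleton 0)
      (Real.volume_singleton (a := 0))
  | insert a s ha ih =>
    have hfa := hf a (Finset.mem_insert_self a s)
    have hfs (i : ι) (hi : i ∈ s) := hf i (Finset.mem_insert_of_mem hi)
    have hsum : MonotoneOn (fun x => ∑ i ∈ s, f i x) D :=
      MonotoneOn.finsetSum fun i hi => (hfs i hi).monotoneOn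
    simp only [Finset.sum_insert ha]
    calc volume ((fun x => f a x + ∑ i ∈ s, f i x) '' D)
        ≤ volume (f a '' D) + volume ((fun x => ∑ i ∈ s, f i x) '' D) :=
          volume_image_add_le hfa.monotoneOn hsum
            fun x hx y hy hxy => add_lt_add_of_lt_of_le (hfa hx hy hxy) (hsum hx hy hxy.le)
      _ ≤ volume (f a '' D) + ∑ i ∈ s, volume (f i '' D) := by gcongr; exact ih hfs

/-- If `f₀, …, f_m` are strictly increasing functions on `D ⊆ ℝ`, then the image of `D`
under their pointwise sum satisfies `H¹({Σₖ fₖ(x) : x ∈ D}) ≤ Σₖ H¹(fₖ(D))`. -/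
theorem stmt_6 (D : Set ℝ) (m : ℕ) (f : Fin (m + 1) → ℝ → ℝ)
    (hf : ∀ k, StrictMonoOn (f k) D) :
    μH[1] ((fun x => ∑ k : Fin (m + 1), f k x) '' D) ≤
      ∑ k : Fin (m + 1), μH[1] (f k '' D) := by
  rw [hausdorffMeasure_real]
  exact volume_image_sum_le Finset.univ fun k _ => hf k
end

section
/- Let I = [a,b] ⊆ [0,1] be a closed interval with a < b, and let S ⊆ [0,1] be such that λ(I \ S) = 0. Then there exist a set N ⊆ S ∩ I and a continuous non-decreasing function f : I → [0,1] such that f(a) = 0, f(b) = 1, λ(N) = 0, and λ(f(N)) = 1. -/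
/-!
A compact set `K ⊆ S ∩ [a, b]` of positive measure is split into a lower and an upper part, each
carrying a third of its measure and separated by a gap; iterating gives a binary tree of compact
pieces, the `2 ^ n` pieces of generation `n` having measure `λ(K) / 3 ^ n`. Descending the tree
along the binary digits of `y ∈ [0, 1)` defines a strictly increasing `G : [0, 1) → K` whose image
`N` is null, being covered by pieces of total measure `(2 / 3) ^ n λ(K)`. The distribution function
`f x = λ {y ∈ [0, 1) | G y ≤ x}` of the image of Lebesgue measure under `G` is monotone and
satisfies `f ∘ G = id`, so `f '' N = [0, 1)`; being monotone with an interval as range, it is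
continuous.
-/

open MeasureTheory Set Filter Topology

theorem MeasurableSet.exists_isCompact_subset_inter_pos {α : Type*} [MeasurableSpace α]
    [TopologicalSpace α] {μ : Measure α} [μ.InnerRegular] {s t : Set α} (ht : MeasurableSet t)
    (ht₀ : μ t ≠ 0) (hts : μ (t \ s) = 0) : ∃ K ⊆ s ∩ t, IsCompact K ∧ 0 < μ K := by
  set M := t \ toMeasurable μ (t \ s)
  have hMst : M ⊆ s ∩ t := fun x ⟨hxt, hx⟩ =>
    ⟨by_contra fun hxs => hx (subset_toMeasurable μ _ ⟨hxt, hxs⟩), hxt⟩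
  have hM : μ M = μ t := measure_sdiff_null (by rwa [measure_toMeasurable])
  obtain ⟨K, hKM, hK, hK₀⟩ := (ht.diff (measurableSet_toMeasurable μ _)).exists_lt_isCompact
    (hM ▸ pos_iff_ne_zero.2 ht₀)
  exact ⟨K, hKM.trans hMst, hK, hK₀⟩

theorem lipschitzWith_measureReal_inter_Iic {K : Set ℝ} (hK : volume K ≠ ⊤) :
    LipschitzWith 1 fun c => volume.real (K ∩ Iic c) := by
  refine LipschitzWith.of_le_add fun x y => ?_
  have hfin : volume (K ∩ Iic y ∪ Ioc y x) ≠ ⊤ :=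
    measure_union_ne_top (measure_ne_top_of_subset inter_subset_left hK) measure_Ioc_lt_top.ne
  calc volume.real (K ∩ Iic x) ≤ volume.real (K ∩ Iic y ∪ Ioc y x) := by
        refine measureReal_mono (fun z ⟨hzK, hzx⟩ => ?_) hfin
        rcases le_or_gt z y with hzy | hzy
        exacts [Or.inl ⟨hzK, hzy⟩, Or.inr ⟨hzy, hzx⟩]
    _ ≤ volume.real (K ∩ Iic y) + volume.real (Ioc y x) := measureReal_union_le _ _
    _ ≤ volume.real (K ∩ Iic y) + dist x y := by
        rw [Real.volume_real_Ioc, Real.dist_eq]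
        gcongr
        exact max_le (le_abs_self _) (abs_nonneg _)

theorem exists_measureReal_inter_Iic_eq {K : Set ℝ} (hK : IsCompact K) {t : ℝ} (ht₀ : 0 ≤ t)
    (ht : t ≤ volume.real K) : ∃ c, volume.real (K ∩ Iic c) = t := by
  obtain ⟨l, hl⟩ := hK.bddBelow
  obtain ⟨u, hu⟩ := hK.bddAbove
  have hl' : K ∩ Iic (l - 1) = ∅ :=
    eq_empty_of_forall_notMem fun z ⟨hzK, hzl⟩ => by linarith [hl hzK, mem_Iic.1 hzl]
  have hu' : K ∩ Iic u = K := inter_eq_left.2 hu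
  exact intermediate_value_univ (l - 1) u
    (lipschitzWith_measureReal_inter_Iic hK.measure_lt_top.ne).continuous
    ⟨by rwa [hl', measureReal_empty], by rwa [hu']⟩

noncomputable def cutPoint (K : Set ℝ) (t : ℝ) : ℝ :=
  Classical.epsilon fun c => volume.real (K ∩ Iic c) = t

noncomputable def lowerThird (K : Set ℝ) : Set ℝ := K ∩ Iic (cutPoint K (volume.real K / 3))

noncomputable def upperThird (K : Set ℝ) : Set ℝ := K ∩ Ici (cutPoint K (2 * volume.real K / 3))

section Thirds

variable {K : Set ℝ}

theorem measureReal_inter_Iic_cutPoint (hK : IsCompact K) {t : ℝ} (ht₀ : 0 ≤ t)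
    (ht : t ≤ volume.real K) : volume.real (K ∩ Iic (cutPoint K t)) = t :=
  Classical.epsilon_spec (exists_measureReal_inter_Iic_eq hK ht₀ ht)

theorem measureReal_lowerThird (hK : IsCompact K) :
    volume.real (lowerThird K) = volume.real K / 3 :=
  measureReal_inter_Iic_cutPoint hK (by positivity)
    (by linarith [measureReal_nonneg (μ := volume) (s := K)])

theorem measureReal_upperThird (hK : IsCompact K) :
    volume.real (upperThird K) = volume.real K / 3 := by
  set c := cutPoint K (2 * volume.real K / 3)
  have hc : volume.real (K ∩ Iic c) = 2 * volume.real K / 3 :=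
    measureReal_inter_Iic_cutPoint hK (by positivity)
      (by linarith [measureReal_nonneg (μ := volume) (s := K)])
  have hsplit := measureReal_inter_add_sdiff (μ := volume) (s := K) (measurableSet_Iic (a := c))
    hK.measure_lt_top.ne
  have hIci : volume.real (K ∩ Ici c) = volume.real (K \ Iic c) := by
    rw [sdiff_eq, compl_Iic]
    exact measureReal_congr ((ae_eq_refl K).inter Ioi_ae_eq_Ici).symm
  rw [upperThird, hIci]
  linarith

theorem lt_of_mem_lowerThird_of_mem_upperThird (hK : IsCompact K) (h₀ : 0 < volume.real K)
    {x y : ℝ} (hx : x ∈ lowerThird K) (hy : y ∈ upperThird K) : x < y := by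
  have hc : cutPoint K (volume.real K / 3) < cutPoint K (2 * volume.real K / 3) := by
    by_contra! h
    have := measureReal_mono (μ := volume) (inter_subset_inter_right K (Iic_subset_Iic.2 h))
      (measure_ne_top_of_subset inter_subset_left hK.measure_lt_top.ne)
    rw [measureReal_inter_Iic_cutPoint hK (by positivity) (by linarith),
      measureReal_inter_Iic_cutPoint hK (by positivity) (by linarith)] at this
    linarith
  exact (mem_Iic.1 hx.2).trans_lt (hc.trans_le (mem_Ici.1 hy.2))

end Thirds

noncomputable def cantorPiece (K : Set ℝ) : ℕ → ℕ → Set ℝ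
  | 0, _ => K
  | n + 1, k =>
    if k % 2 = 0 then lowerThird (cantorPiece K n (k / 2)) else upperThird (cantorPiece K n (k / 2))

section CantorPiece

variable {K : Set ℝ}

theorem cantorPiece_succ_subset (K : Set ℝ) (n k : ℕ) :
    cantorPiece K (n + 1) k ⊆ cantorPiece K n (k / 2) := by
  rw [cantorPiece]
  split_ifs
  exacts [inter_subset_left, inter_subset_left]

theorem cantorPiece_subset (K : Set ℝ) (n k : ℕ) : cantorPiece K n k ⊆ K := by
  induction n generalizing k with
  | zero => exact subset_rfl
  | succ n ih => exact (cantorPiece_succ_subset K n k).trans (ih _)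

theorem isCompact_cantorPiece (hK : IsCompact K) (n k : ℕ) : IsCompact (cantorPiece K n k) := by
  induction n generalizing k with
  | zero => exact hK
  | succ n ih =>
    rw [cantorPiece]
    split_ifs
    exacts [(ih _).inter_right isClosed_Iic, (ih _).inter_right isClosed_Ici]

theorem measureReal_cantorPiece (hK : IsCompact K) (n k : ℕ) :
    volume.real (cantorPiece K n k) = volume.real K / 3 ^ n := by
  induction n generalizing k with
  | zero => simp [cantorPiece]
  | succ n ih =>
    rw [cantorPiece]
    split_ifs
    · rw [measureReal_lowerThird (isCompact_cantorPiece hK n _), ih, pow_succ, div_div]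
    · rw [measureReal_upperThird (isCompact_cantorPiece hK n _), ih, pow_succ, div_div]

theorem measureReal_cantorPiece_pos (hK : IsCompact K) (h₀ : 0 < volume.real K) (n k : ℕ) :
    0 < volume.real (cantorPiece K n k) := by
  rw [measureReal_cantorPiece hK]
  positivity

theorem lt_of_mem_cantorPiece (hK : IsCompact K) (h₀ : 0 < volume.real K) {n k k' : ℕ}
    (hk : k < k') (hk' : k' < 2 ^ n) {x x' : ℝ} (hx : x ∈ cantorPiece K n k)
    (hx' : x' ∈ cantorPiece K n k') : x < x' := by
  induction n generalizing k k' x x' with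
  | zero => omega
  | succ n ih =>
    rcases (Nat.div_le_div_right (c := 2) hk.le).lt_or_eq with hlt | heq
    · exact ih hlt (by omega) (cantorPiece_succ_subset K n k hx)
        (cantorPiece_succ_subset K n k' hx')
    · have hk₂ : k % 2 = 0 := by omega
      have hk₂' : k' % 2 ≠ 0 := by omega
      rw [cantorPiece, if_pos hk₂] at hx
      rw [cantorPiece, if_neg hk₂', ← heq] at hx'
      exact lt_of_mem_lowerThird_of_mem_upperThird (isCompact_cantorPiece hK n _)
        (measureReal_cantorPiece_pos hK h₀ n _) hx hx'

end CantorPiece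

/-- `⌊2 ^ n * y⌋₊` encodes the first `n` binary digits of `y`. -/
noncomputable def cantorPoint (K : Set ℝ) (y : ℝ) : ℝ := sInf (⋂ n, cantorPiece K n ⌊2 ^ n * y⌋₊)

section CantorPoint

variable {K : Set ℝ}

theorem cantorPoint_mem_cantorPiece (hK : IsCompact K) (h₀ : 0 < volume.real K) (y : ℝ)
    (n : ℕ) : cantorPoint K y ∈ cantorPiece K n ⌊2 ^ n * y⌋₊ := by
  set T : ℕ → Set ℝ := fun n => cantorPiece K n ⌊2 ^ n * y⌋₊
  have hT : ∀ n, T (n + 1) ⊆ T n := fun n => by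
    have hdiv : ⌊2 ^ (n + 1) * y⌋₊ / 2 = ⌊2 ^ n * y⌋₊ := by
      rw [← Nat.floor_div_ofNat, pow_succ, mul_right_comm, mul_div_cancel_right₀ _ two_ne_zero]
    simpa only [T, hdiv] using cantorPiece_succ_subset K n ⌊2 ^ (n + 1) * y⌋₊
  have hclosed : ∀ n, IsClosed (T n) := fun n => (isCompact_cantorPiece hK n _).isClosed
  have hne : (⋂ n, T n).Nonempty :=
    IsCompact.nonempty_iInter_of_sequence_nonempty_isCompact_isClosed T hT
      (fun n => nonempty_of_measureReal_ne_zero (measureReal_cantorPiece_pos hK h₀ n _).ne')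
      (isCompact_cantorPiece hK 0 _) hclosed
  have hcompact : IsCompact (⋂ n, T n) :=
    (isCompact_cantorPiece hK 0 _).of_isClosed_subset (isClosed_iInter hclosed)
      (iInter_subset _ 0)
  exact mem_iInter.1 (hcompact.sInf_mem hne) n

theorem cantorPoint_mem (hK : IsCompact K) (h₀ : 0 < volume.real K) (y : ℝ) :
    cantorPoint K y ∈ K :=
  cantorPiece_subset K 0 _ (cantorPoint_mem_cantorPiece hK h₀ y 0)

theorem strictMonoOn_cantorPoint (hK : IsCompact K) (h₀ : 0 < volume.real K) :
    StrictMonoOn (cantorPoint K) (Ico 0 1) := by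
  intro y hy y' hy' hyy'
  obtain ⟨n, hn⟩ := pow_unbounded_of_one_lt (y' - y)⁻¹ one_lt_two
  have h2n : (0 : ℝ) < 2 ^ n := by positivity
  have hgap : 2 ^ n * y + 1 ≤ 2 ^ n * y' := by
    rw [inv_lt_iff_one_lt_mul₀ (sub_pos.2 hyy')] at hn
    nlinarith
  have hlt : ⌊2 ^ n * y⌋₊ < ⌊2 ^ n * y'⌋₊ := calc
    ⌊2 ^ n * y⌋₊ < ⌊2 ^ n * y⌋₊ + 1 := Nat.lt_succ_self _
    _ = ⌊2 ^ n * y + 1⌋₊ := (Nat.floor_add_one (mul_nonneg h2n.le hy.1)).symm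
    _ ≤ ⌊2 ^ n * y'⌋₊ := Nat.floor_le_floor hgap
  have hbound : ⌊2 ^ n * y'⌋₊ < 2 ^ n := by
    rw [Nat.floor_lt (mul_nonneg h2n.le hy'.1)]
    push_cast
    nlinarith [hy'.2]
  exact lt_of_mem_cantorPiece hK h₀ hlt hbound (cantorPoint_mem_cantorPiece hK h₀ y n)
    (cantorPoint_mem_cantorPiece hK h₀ y' n)

theorem volume_image_cantorPoint (hK : IsCompact K) (h₀ : 0 < volume.real K) :
    volume (cantorPoint K '' Ico 0 1) = 0 := by
  have hbound : ∀ n : ℕ, volume (cantorPoint K '' Ico 0 1)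
      ≤ ENNReal.ofReal ((2 / 3) ^ n * volume.real K) := fun n => by
    have hcover : cantorPoint K '' Ico 0 1 ⊆ ⋃ k ∈ Finset.range (2 ^ n), cantorPiece K n k := by
      rintro _ ⟨y, hy, rfl⟩
      refine mem_biUnion (x := ⌊2 ^ n * y⌋₊) ?_ (cantorPoint_mem_cantorPiece hK h₀ y n)
      rw [Finset.mem_coe, Finset.mem_range, Nat.floor_lt (mul_nonneg (by positivity) hy.1)]
      push_cast
      nlinarith [hy.2, pow_pos (two_pos (α := ℝ)) n]
    calc volume (cantorPoint K '' Ico 0 1)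
        ≤ ∑ k ∈ Finset.range (2 ^ n), volume (cantorPiece K n k) :=
          (measure_mono hcover).trans (measure_biUnion_finset_le _ _)
      _ = ∑ k ∈ Finset.range (2 ^ n), ENNReal.ofReal (volume.real K / 3 ^ n) := by
          refine Finset.sum_congr rfl fun k _ => ?_
          rw [← measureReal_cantorPiece hK,
            ofReal_measureReal (isCompact_cantorPiece hK n k).measure_lt_top.ne]
      _ = ENNReal.ofReal ((2 / 3) ^ n * volume.real K) := by
          rw [Finset.sum_const, Finset.card_range, nsmul_eq_mul, ← ENNReal.ofReal_natCast,
            ← ENNReal.ofReal_mul (by positivity)]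
          congr 1
          push_cast
          rw [div_eq_mul_inv (2 : ℝ), mul_pow, inv_pow]
          ring
  have hlim : Tendsto (fun n : ℕ => ENNReal.ofReal ((2 / 3) ^ n * volume.real K)) atTop (𝓝 0) := by
    simpa using ENNReal.tendsto_ofReal
      ((tendsto_pow_atTop_nhds_zero_of_lt_one (by norm_num) (by norm_num)).mul_const _)
  exact nonpos_iff_eq_zero.1 (ge_of_tendsto' hlim hbound)

end CantorPoint

noncomputable def imageCdf (G : ℝ → ℝ) (x : ℝ) : ℝ := volume.real {y ∈ Ico (0 : ℝ) 1 | G y ≤ x}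

section ImageCdf

variable {G : ℝ → ℝ}

theorem monotone_imageCdf (G : ℝ → ℝ) : Monotone (imageCdf G) := fun _ _ hxx' =>
  measureReal_mono (fun _ ⟨hy, hGy⟩ => ⟨hy, hGy.trans hxx'⟩)
    (measure_ne_top_of_subset (sep_subset _ _) measure_Ico_lt_top.ne)

theorem imageCdf_mem_Icc (G : ℝ → ℝ) (x : ℝ) : imageCdf G x ∈ Icc 0 1 :=
  ⟨measureReal_nonneg, (measureReal_mono (sep_subset _ _) measure_Ico_lt_top.ne).trans_eq
    (by simp [Real.volume_real_Ico])⟩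

theorem imageCdf_apply (hG : StrictMonoOn G (Ico 0 1)) {y : ℝ} (hy : y ∈ Ico 0 1) :
    imageCdf G (G y) = y := by
  have hsep : {y' ∈ Ico (0 : ℝ) 1 | G y' ≤ G y} = Icc 0 y := by
    ext y'
    refine ⟨fun ⟨hy', hle⟩ => ⟨hy'.1, (hG.le_iff_le hy' hy).1 hle⟩, fun hy' => ?_⟩
    have hy'₁ : y' ∈ Ico 0 1 := ⟨hy'.1, hy'.2.trans_lt hy.2⟩
    exact ⟨hy'₁, (hG.le_iff_le hy'₁ hy).2 hy'.2⟩
  rw [imageCdf, hsep, Real.volume_real_Icc, sub_zero, max_eq_left hy.1]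

theorem imageCdf_eq_zero (hG : StrictMonoOn G (Ico 0 1)) {a : ℝ} (ha : ∀ y ∈ Ico 0 1, a ≤ G y) :
    imageCdf G a = 0 := by
  have hsub : {y ∈ Ico (0 : ℝ) 1 | G y ≤ a}.Subsingleton := fun y hy y' hy' =>
    hG.injOn hy.1 hy'.1
      ((le_antisymm hy.2 (ha y hy.1)).trans (le_antisymm hy'.2 (ha y' hy'.1)).symm)
  rw [imageCdf, measureReal_def, hsub.measure_zero, ENNReal.toReal_zero]

theorem imageCdf_eq_one {b : ℝ} (hb : ∀ y ∈ Ico 0 1, G y ≤ b) : imageCdf G b = 1 := by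
  rw [imageCdf, sep_eq_self_iff_mem_true.2 hb, Real.volume_real_Ico]
  norm_num

theorem continuous_imageCdf {b : ℝ} (hG : StrictMonoOn G (Ico 0 1))
    (hb : ∀ y ∈ Ico 0 1, G y ≤ b) : Continuous (imageCdf G) := by
  set F : ℝ → Icc (0 : ℝ) 1 := codRestrict (imageCdf G) _ (imageCdf_mem_Icc G)
  have hF : Function.Surjective F := by
    rintro ⟨t, ht₀, ht₁⟩
    rcases ht₁.lt_or_eq with ht₁ | rfl
    · exact ⟨G t, Subtype.ext (imageCdf_apply hG ⟨ht₀, ht₁⟩)⟩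
    · exact ⟨b, Subtype.ext (imageCdf_eq_one hb)⟩
  have hFmono : Monotone F := fun _ _ hxx' => monotone_imageCdf G hxx'
  exact (hFmono.continuous_of_surjective hF).subtype_val

end ImageCdf

theorem stmt_8_general (a b : ℝ) (hab : a < b)
    (S : Set ℝ) (hnull : volume (Set.Icc a b \ S) = 0) :
    ∃ N ⊆ S ∩ Set.Icc a b, ∃ f : ℝ → ℝ,
      ContinuousOn f (Set.Icc a b) ∧
      MonotoneOn f (Set.Icc a b) ∧
      Set.MapsTo f (Set.Icc a b) (Set.Icc 0 1) ∧
      f a = 0 ∧ f b = 1 ∧ volume N = 0 ∧ volume (f '' N) = 1 := by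
  obtain ⟨K, hKS, hK, hK₀⟩ := measurableSet_Icc.exists_isCompact_subset_inter_pos
    (by simpa [Real.volume_Icc] using hab) hnull
  have hK₀' : 0 < volume.real K := ENNReal.toReal_pos hK₀.ne' hK.measure_lt_top.ne
  set G := cantorPoint K
  have hG : StrictMonoOn G (Ico 0 1) := strictMonoOn_cantorPoint hK hK₀'
  have hGS : ∀ y, G y ∈ S ∩ Icc a b := fun y => hKS (cantorPoint_mem hK hK₀' y)
  refine ⟨G '' Ico 0 1, image_subset_iff.2 fun y _ => hGS y, imageCdf G,
    (continuous_imageCdf hG fun y _ => (hGS y).2.2).continuousOn,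
    (monotone_imageCdf G).monotoneOn _, fun x _ => imageCdf_mem_Icc G x,
    imageCdf_eq_zero hG fun y _ => (hGS y).2.1, imageCdf_eq_one fun y _ => (hGS y).2.2,
    volume_image_cantorPoint hK hK₀', ?_⟩
  rw [image_image, image_congr fun y hy => imageCdf_apply hG hy, image_id', Real.volume_Ico]
  norm_num

/-- Let `I = [a,b] ⊆ [0,1]` with `a < b` and let `S ⊆ [0,1]` satisfy `λ(I \ S) = 0`. Then there
are a null set `N ⊆ S ∩ I` and a continuous non-decreasing `f : I → [0,1]` with `f(a) = 0`,
`f(b) = 1` and `λ(f(N)) = 1`. -/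
theorem stmt_8 (a b : ℝ) (hab : a < b) (hI : Set.Icc a b ⊆ Set.Icc 0 1)
    (S : Set ℝ) (hS : S ⊆ Set.Icc 0 1) (hnull : volume (Set.Icc a b \ S) = 0) :
    ∃ N ⊆ S ∩ Set.Icc a b, ∃ f : ℝ → ℝ,
      ContinuousOn f (Set.Icc a b) ∧
      MonotoneOn f (Set.Icc a b) ∧
      Set.MapsTo f (Set.Icc a b) (Set.Icc 0 1) ∧
      f a = 0 ∧ f b = 1 ∧ volume N = 0 ∧ volume (f '' N) = 1 :=
  stmt_8_general a b hab S hnull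
end

section
/- Let A ⊆ [0,1]^2 ⊆ ℝ^2 (Euclidean plane) be a set such that for any two distinct points x = (x_1,x_2) and y = (y_1,y_2) in A there exists a unique index i ∈ {1,2} with x_i = y_i. Then H^1(A) ≤ 1, where H^1 denotes the 1-dimensional Hausdorff measure. -/
/-!
If two distinct points `a, b ∈ A` share their `i`-th coordinate, then every `x ∈ A` does too:
otherwise `x` would have to share the other coordinate with both `a` and `b`, forcing `a = b`.
So `A` lies on an axis-parallel line, and its trace on `[0,1]²` is a segment of length at most `1`.
-/

open MeasureTheory Set

theorem Fin.eq_of_ne_of_ne_two {i j k : Fin 2} (hj : j ≠ i) (hk : k ≠ i) : j = k := by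
  omega

theorem exists_forall_coord_eq_of_pairwise_exists_coord_eq {α : Type*} {A : Set (Fin 2 → α)}
    (hA : A.Pairwise fun x y => ∃ i, x i = y i) :
    ∃ i, ∀ x ∈ A, ∀ y ∈ A, x i = y i := by
  by_cases hsub : A.Subsingleton
  · exact ⟨0, fun x hx y hy => by rw [hsub hx hy]⟩
  obtain ⟨a, ha, b, hb, hab⟩ := not_subsingleton_iff.mp hsub
  obtain ⟨i, hi⟩ := hA ha hb hab
  suffices h : ∀ x ∈ A, x i = a i from ⟨i, fun x hx y hy => (h x hx).trans (h y hy).symm⟩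
  intro x hx
  by_contra hxi
  obtain ⟨j, hj⟩ := hA hx ha (by rintro rfl; exact hxi rfl)
  obtain ⟨k, hk⟩ := hA hx hb (by rintro rfl; exact hxi hi.symm)
  have hji : j ≠ i := by rintro rfl; exact hxi hj
  have hki : k ≠ i := by rintro rfl; exact hxi (hk.trans hi.symm)
  refine hab (funext fun l => ?_)
  by_cases hl : l = i
  · rw [hl, hi]
  · rw [Fin.eq_of_ne_of_ne_two hl hji, ← hj, Fin.eq_of_ne_of_ne_two hji hki, hk]

theorem hausdorffMeasure_one_le_one_of_forall_coord_eq {ι : Type*} [Fintype ι] [DecidableEq ι]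
    {A : Set (EuclideanSpace ℝ ι)} (j : ι) (hAj : ∀ x ∈ A, x j ∈ Icc (0 : ℝ) 1)
    (hA : ∀ x ∈ A, ∀ y ∈ A, ∀ k ≠ j, x k = y k) :
    μH[1] A ≤ 1 := by
  rcases A.eq_empty_or_nonempty with rfl | ⟨c, hc⟩
  · simp
  set e : EuclideanSpace ℝ ι := EuclideanSpace.single j 1
  set u := c - c j • e
  have hsub : A ⊆ segment ℝ u (u + e) := by
    intro x hx
    rw [segment_eq_image']
    refine ⟨x j, hAj x hx, ?_⟩
    ext k
    by_cases hk : k = j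
    · simp [u, e, hk]
    · simp [u, e, hk, hA c hc x hx k hk]
  calc μH[1] A ≤ μH[1] (segment ℝ u (u + e)) := measure_mono hsub
    _ = 1 := by simp [hausdorffMeasure_segment, edist_dist, e]

/-- A `2`-de Bruijn–Erdős set `A ⊆ [0,1]² ⊆ ℝ²` (any two distinct points of `A` agree in
exactly one coordinate) satisfies `H¹(A) ≤ 1`. -/
theorem stmt_9 (A : Set (EuclideanSpace ℝ (Fin 2)))
    (hA : ∀ x ∈ A, ∀ i : Fin 2, x i ∈ Set.Icc (0 : ℝ) 1)
    (hdBE : ∀ x ∈ A, ∀ y ∈ A, x ≠ y → ∃! i : Fin 2, x i = y i) :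
    μH[1] A ≤ 1 := by
  obtain ⟨i, hi⟩ := exists_forall_coord_eq_of_pairwise_exists_coord_eq (A := WithLp.ofLp '' A)
    (by
      rintro _ ⟨x, hx, rfl⟩ _ ⟨y, hy, rfl⟩ hxy
      exact (hdBE x hx y hy (ne_of_apply_ne _ hxy)).exists)
  obtain ⟨j, hji⟩ : ∃ j : Fin 2, j ≠ i := ⟨i + 1, by simp⟩
  refine hausdorffMeasure_one_le_one_of_forall_coord_eq j (fun x hx => hA x hx j) ?_
  intro x hx y hy k hkj
  rw [Fin.eq_of_ne_of_ne_two hkj hji.symm]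
  exact hi _ (mem_image_of_mem _ hx) _ (mem_image_of_mem _ hy)
end

section
/- Let n ≥ 2 and let A ⊆ [0,1]^n be an infinite set such that for any two distinct points x = (x_1,…,x_n) and y = (y_1,…,y_n) in A there exists a unique index i ∈ {1,…,n} with x_i = y_i. Then there exist an index i ∈ {1,…,n} and a real number α ∈ [0,1] such that every point of A has i-th coordinate equal to α, and for every index j ≠ i the projection onto the j-th coordinate restricted to A is injective. -/
open MeasureTheory

/-- If `A ⊆ [0,1]ⁿ` is an infinite `n`-de Bruijn–Erdős set (any two distinct points of `A`
agree in exactly one coordinate), then there are an index `i` and `α ∈ [0,1]` such that every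
point of `A` has `i`-th coordinate `α`, and for every `j ≠ i` the projection onto the `j`-th
coordinate is injective on `A`. -/
theorem stmt_11 (n : ℕ) (hn : 2 ≤ n) (A : Set (EuclideanSpace ℝ (Fin n)))
    (hA : ∀ x ∈ A, ∀ i : Fin n, x i ∈ Set.Icc (0 : ℝ) 1)
    (hinf : A.Infinite)
    (hdBE : ∀ x ∈ A, ∀ y ∈ A, x ≠ y → ∃! i : Fin n, x i = y i) :
    ∃ i : Fin n, ∃ α ∈ Set.Icc (0 : ℝ) 1,
      (∀ x ∈ A, x i = α) ∧
      ∀ j : Fin n, j ≠ i → Set.InjOn (fun x : EuclideanSpace ℝ (Fin n) => x j) A := by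
  classical
  obtain ⟨x, hx⟩ := hinf.nonempty
  have hA'inf : (A \ {x}).Infinite := hinf.diff (Set.finite_singleton x)
  haveI : Infinite ↥(A \ {x}) := hA'inf.to_subtype
  have hne : ∀ y : ↥(A \ {x}), x ≠ (y : EuclideanSpace ℝ (Fin n)) :=
    fun y h => y.2.2 h.symm
  let f : ↥(A \ {x}) → Fin n := fun y => (hdBE x hx y y.2.1 (hne y)).choose
  have hf : ∀ y : ↥(A \ {x}), x (f y) = (y : EuclideanSpace ℝ (Fin n)) (f y) :=
    fun y => (hdBE x hx y y.2.1 (hne y)).choose_spec.1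
  obtain ⟨i, hi⟩ := Finite.exists_infinite_fiber f
  have hbi : ∀ b : ↥(f ⁻¹' {i}), ((b.1 : EuclideanSpace ℝ (Fin n))) i = x i := by
    intro b
    have h := hf b.1
    have h2 : f b.1 = i := b.2
    rw [h2] at h
    exact h.symm
  have hall : ∀ z ∈ A, z i = x i := by
    intro z hz
    by_contra hzi
    haveI : Infinite ↥(f ⁻¹' {i}) := hi
    have hzb : ∀ b : ↥(f ⁻¹' {i}), z ≠ (b.1 : EuclideanSpace ℝ (Fin n)) := by
      intro b h
      exact hzi (by rw [h, hbi b])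
    let g : ↥(f ⁻¹' {i}) → Fin n := fun b => (hdBE z hz b.1 b.1.2.1 (hzb b)).choose
    have hg : ∀ b : ↥(f ⁻¹' {i}), z (g b) = (b.1 : EuclideanSpace ℝ (Fin n)) (g b) :=
      fun b => (hdBE z hz b.1 b.1.2.1 (hzb b)).choose_spec.1
    have hgi : ∀ b : ↥(f ⁻¹' {i}), g b ≠ i := by
      intro b h
      have := hg b
      rw [h, hbi b] at this
      exact hzi this
    obtain ⟨b, b', hbb', hgbb⟩ := Finite.exists_ne_map_eq_of_infinite g
    have hval : (b.1 : EuclideanSpace ℝ (Fin n)) ≠ (b'.1 : EuclideanSpace ℝ (Fin n)) :=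
      fun h => hbb' (Subtype.ext (Subtype.ext h))
    obtain ⟨k, hk, huniq⟩ := hdBE b.1 b.1.2.1 b'.1 b'.1.2.1 hval
    have h1 : i = k := huniq i (show (b.1 : EuclideanSpace ℝ (Fin n)) i = (b'.1 : EuclideanSpace ℝ (Fin n)) i by rw [hbi b, hbi b'])
    have h2 : g b = k := huniq (g b) (show (b.1 : EuclideanSpace ℝ (Fin n)) (g b) = (b'.1 : EuclideanSpace ℝ (Fin n)) (g b) by rw [← hg b, hgbb, hg b'])
    exact hgi b (h2.trans h1.symm)
  refine ⟨i, x i, hA x hx i, hall, ?_⟩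
  intro j hj a ha b hb hab
  by_contra hne'
  obtain ⟨k, hk, huniq⟩ := hdBE a ha b hb hne'
  have h1 : i = k := huniq i (show a i = b i by rw [hall a ha, hall b hb])
  have h2 : j = k := huniq j hab
  exact hj (h2.trans h1.symm)
end

section
/- Let A be a subset of the real line and let δ > 0. Then the infimum of Σ_i diam(U_i) over all at most countable covers {U_i} of A by sets of diameter at most δ equals the infimum of Σ_i diam(V_i) over all at most countable left-right ordered partitions {V_i} of A into sets of diameter at most δ (both infima taken in the extended nonnegative reals). -/
/-!
Replace each `Uᵢ` by its convex hull, an interval of length at most `diam Uᵢ`. The connected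
components of the union of these intervals are countably many disjoint intervals; cutting them
along the grid `δℤ` yields disjoint intervals of diameter at most `δ` whose total length is the
measure of the union, hence at most `Σ diam Uᵢ`. Disjoint intervals are automatically left-right
ordered, so their traces on `A` form the required partition.
-/

open MeasureTheory Set Function

namespace Set.OrdConnected

theorem ediam_le_volume {X : Set ℝ} (hX : X.OrdConnected) : Metric.ediam X ≤ volume X := by
  refine Metric.ediam_le fun x hx y hy => ?_
  wlog hxy : x ≤ y generalizing x y
  · rw [edist_comm]
    exact this y hy x hx (le_of_not_ge hxy)
  calc edist x y = volume (Icc x y) := by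
        rw [Real.volume_Icc, edist_dist, Real.dist_eq, abs_sub_comm,
          abs_of_nonneg (sub_nonneg.2 hxy)]
    _ ≤ volume X := measure_mono (hX.out hx hy)

theorem le_or_le_of_disjoint {X Y : Set ℝ} (hX : X.OrdConnected) (hY : Y.OrdConnected)
    (hXY : Disjoint X Y) :
    (∀ x ∈ X, ∀ y ∈ Y, x ≤ y) ∨ (∀ x ∈ X, ∀ y ∈ Y, y ≤ x) := by
  by_contra! h
  obtain ⟨⟨x, hx, y, hy, hyx⟩, ⟨x', hx', y', hy', hxy'⟩⟩ := h
  rcases le_or_gt y' x with h | h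
  · exact hXY.notMem_of_mem_left (hX.out hx' hx ⟨hxy'.le, h⟩) hy'
  · exact hXY.notMem_of_mem_left hx (hY.out hy hy' ⟨hyx.le, h.le⟩)

end Set.OrdConnected

theorem disjointed_eq_self_or_empty {α ι : Type*} [Preorder ι] [LocallyFiniteOrderBot ι]
    {f : ι → Set α} (hf : ∀ i j, f i = f j ∨ Disjoint (f i) (f j)) (i : ι) :
    disjointed f i = f i ∨ disjointed f i = ∅ := by
  by_cases h : ∃ j < i, f j = f i
  · obtain ⟨j, hji, hfji⟩ := h
    refine Or.inr (eq_empty_of_forall_notMem fun x hx => ?_)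
    rw [disjointed_eq_inter_compl, mem_inter_iff, mem_iInter₂] at hx
    exact hx.2 j hji (hfji ▸ hx.1)
  · exact Or.inl <| disjointed_eq_self fun j hji =>
      (hf j i).resolve_left fun hfji => h ⟨j, hji, hfji⟩

theorem exists_pairwise_disjoint_isPreconnected_iUnion_eq {X : Type*} [TopologicalSpace X]
    (I : ℕ → Set X) (hI : ∀ i, IsPreconnected (I i)) :
    ∃ D : ℕ → Set X, Pairwise (Disjoint on D) ∧ (∀ i, IsPreconnected (D i)) ∧
      ⋃ i, D i = ⋃ i, I i := by
  classical
  set S := ⋃ i, I i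
  -- one component of `S` per index; `disjointed` then keeps each component only once
  let C : ℕ → Set X := fun i =>
    if h : (I i).Nonempty then connectedComponentIn S h.some else ∅
  have hC : ∀ i, IsPreconnected (C i) := by
    intro i
    unfold C
    split_ifs
    exacts [isPreconnected_connectedComponentIn, isPreconnected_empty]
  have hC_eq_or_disjoint : ∀ i j, C i = C j ∨ Disjoint (C i) (C j) := by
    intro i j
    refine or_iff_not_imp_right.2 fun h => ?_
    obtain ⟨z, hzi, hzj⟩ := not_disjoint_iff.1 h
    unfold C at hzi hzj ⊢
    split_ifs at hzi hzj ⊢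
    · rw [connectedComponentIn_eq hzi, connectedComponentIn_eq hzj]
    all_goals simp at hzi hzj
  have hIC : ∀ i, I i ⊆ C i := by
    intro i
    unfold C
    split_ifs with h
    · exact (hI i).subset_connectedComponentIn h.some_mem (subset_iUnion I i)
    · exact (not_nonempty_iff_eq_empty.1 h).subset
  have hCS : ∀ i, C i ⊆ S := by
    intro i
    unfold C
    split_ifs
    exacts [connectedComponentIn_subset _ _, empty_subset _]
  refine ⟨disjointed C, disjoint_disjointed C, fun i => ?_, ?_⟩
  · rcases disjointed_eq_self_or_empty hC_eq_or_disjoint i with h | h <;> rw [h]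
    exacts [hC i, isPreconnected_empty]
  · rw [iUnion_disjointed]
    exact (iUnion_subset hCS).antisymm (iUnion_mono hIC)

theorem exists_pairwise_disjoint_ordConnected_ediam_le {δ : ℝ} (hδ : 0 < δ)
    (D : ℕ → Set ℝ) (hD : Pairwise (Disjoint on D)) (hDc : ∀ i, (D i).OrdConnected) :
    ∃ Q : ℕ → Set ℝ, Pairwise (Disjoint on Q) ∧ (∀ n, (Q n).OrdConnected) ∧
      (∀ n, Metric.ediam (Q n) ≤ ENNReal.ofReal δ) ∧ ⋃ n, Q n = ⋃ i, D i := by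
  let T : ℤ → Set ℝ := fun k => Ico (k • δ) ((k + 1) • δ)
  let P : ℕ × ℤ → Set ℝ := fun p => D p.1 ∩ T p.2
  let e : ℕ ≃ ℕ × ℤ := (Denumerable.eqv (ℕ × ℤ)).symm
  have hP : Pairwise (Disjoint on P) := by
    rintro ⟨i, k⟩ ⟨j, l⟩ hne
    by_cases hij : i = j
    · subst hij
      have hkl : k ≠ l := fun h => hne (by rw [h])
      exact (pairwise_disjoint_Ico_zsmul δ hkl).mono inter_subset_right inter_subset_right
    · exact (hD hij).mono inter_subset_left inter_subset_left
  refine ⟨fun n => P (e n), hP.comp_of_injective e.injective,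
    fun n => (hDc _).inter ordConnected_Ico, fun n => ?_, ?_⟩
  · calc Metric.ediam (P (e n)) ≤ Metric.ediam (T (e n).2) :=
          Metric.ediam_mono inter_subset_right
      _ = ENNReal.ofReal δ := by rw [Real.ediam_Ico, add_smul, one_smul, add_sub_cancel_left]
  · rw [e.surjective.iUnion_comp P, iUnion_prod']
    simp_rw [P, T, ← inter_iUnion, iUnion_Ico_zsmul hδ, inter_univ]

theorem lrOrderedPartition_inter {ι : Type*} {Q : ι → Set ℝ} (hQ : Pairwise (Disjoint on Q))
    (hQc : ∀ i, (Q i).OrdConnected) {A : Set ℝ} (hA : A ⊆ ⋃ i, Q i) :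
    LROrderedPartition (fun i => A ∩ Q i) A :=
  ⟨by rw [← inter_iUnion, inter_eq_left.2 hA],
    fun _ _ hij => (hQ hij).mono inter_subset_right inter_subset_right,
    fun i j hij => ((hQc i).le_or_le_of_disjoint (hQc j) (hQ hij)).imp
      (fun h x hx y hy => h x hx.2 y hy.2) (fun h x hx y hy => h x hx.2 y hy.2)⟩

theorem tsum_ediam_inter_le_volume_iUnion {ι : Type*} [Countable ι] {Q : ι → Set ℝ}
    (hQ : Pairwise (Disjoint on Q)) (hQc : ∀ i, (Q i).OrdConnected) (A : Set ℝ) :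
    ∑' i, Metric.ediam (A ∩ Q i) ≤ volume (⋃ i, Q i) := by
  rw [measure_iUnion hQ fun i => (hQc i).measurableSet]
  exact ENNReal.tsum_le_tsum fun i =>
    (Metric.ediam_mono inter_subset_right).trans (hQc i).ediam_le_volume

theorem exists_lrOrderedPartition_tsum_ediam_le (A : Set ℝ) {δ : ℝ} (hδ : 0 < δ)
    (U : ℕ → Set ℝ) (hU : A ⊆ ⋃ i, U i) :
    ∃ V : ℕ → Set ℝ, LROrderedPartition V A ∧
      (∀ n, Metric.ediam (V n) ≤ ENNReal.ofReal δ) ∧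
      ∑' n, Metric.ediam (V n) ≤ ∑' i, Metric.ediam (U i) := by
  obtain ⟨D, hD, hDc, hDU⟩ := exists_pairwise_disjoint_isPreconnected_iUnion_eq
    (fun i => convexHull ℝ (U i)) fun i => (convex_convexHull ℝ _).isPreconnected
  obtain ⟨Q, hQ, hQc, hQδ, hQD⟩ :=
    exists_pairwise_disjoint_ordConnected_ediam_le hδ D hD fun i => (hDc i).ordConnected
  have hUQ : ⋃ i, U i ⊆ ⋃ n, Q n := by
    rw [hQD, hDU]
    exact iUnion_mono fun i => subset_convexHull ℝ _
  refine ⟨fun n => A ∩ Q n, lrOrderedPartition_inter hQ hQc (hU.trans hUQ),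
    fun n => (Metric.ediam_mono inter_subset_right).trans (hQδ n), ?_⟩
  calc ∑' n, Metric.ediam (A ∩ Q n) ≤ volume (⋃ n, Q n) :=
        tsum_ediam_inter_le_volume_iUnion hQ hQc A
    _ = volume (⋃ i, convexHull ℝ (U i)) := by rw [hQD, hDU]
    _ ≤ ∑' i, volume (convexHull ℝ (U i)) := measure_iUnion_le _
    _ ≤ ∑' i, Metric.ediam (U i) := ENNReal.tsum_le_tsum fun i =>
        (Real.volume_le_diam _).trans_eq (convexHull_ediam _)

/-- For `A ⊆ ℝ` and `δ > 0`, the infimum of `Σᵢ diam Uᵢ` over all at most countable covers of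
`A` by sets of diameter at most `δ` (the quantity `H¹_δ(A)`) equals the corresponding infimum
taken only over at most countable left-right ordered partitions of `A` into sets of diameter
at most `δ`. -/
theorem stmt_13 (A : Set ℝ) (δ : ℝ) (hδ : 0 < δ) :
    (⨅ (U : ℕ → Set ℝ) (_ : A ⊆ ⋃ i, U i)
        (_ : ∀ i, EMetric.diam (U i) ≤ ENNReal.ofReal δ),
      ∑' i, EMetric.diam (U i)) =
    ⨅ (V : ℕ → Set ℝ) (_ : LROrderedPartition V A)
        (_ : ∀ i, EMetric.diam (V i) ≤ ENNReal.ofReal δ),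
      ∑' i, EMetric.diam (V i) := by
  apply le_antisymm
  · refine le_iInf fun V => le_iInf fun hV => le_iInf fun hVδ => ?_
    exact iInf_le_of_le V (iInf₂_le_of_le hV.1.symm.subset hVδ le_rfl)
  · refine le_iInf fun U => le_iInf fun hU => le_iInf fun _ => ?_
    obtain ⟨V, hV, hVδ, hVU⟩ := exists_lrOrderedPartition_tsum_ediam_le A hδ U hU
    exact iInf_le_of_le V (iInf₂_le_of_le hV hVδ hVU)
end

section
/- Let D ⊆ ℝ, let f_1, f_2 : D → ℝ be strictly increasing functions, and let δ > 0. Then H^1_{2δ}((f_1 + f_2)(D)) ≤ H^1_δ(f_1(D)) + H^1_δ(f_2(D)), where for a set E ⊆ ℝ and η > 0, H^1_η(E) denotes the infimum of Σ_i diam(U_i) over all at most countable covers {U_i} of E by sets of diameter at most η (the infimum taken in the extended nonnegative reals). -/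
/-!
Write `S = (f₁ + f₂)(D)`. Because `f₁` and `f₂` increase together, `f₁ x` is a function of
`s = f₁ x + f₂ x` on `S`, and it extends to a function `p : ℝ → ℝ` such that both `p` and
`t ↦ t - p t` are monotone. Both are then continuous Stieltjes functions, and their Stieltjes
measures add up to Lebesgue measure. A continuous Stieltjes function `F` satisfies
`μ_F (F⁻¹' U) ≤ diam U`, so `μ_p S ≤ H¹_δ(f₁(D))` and `μ_{id - p} S ≤ H¹_δ(f₂(D))`,
while `H¹_{2δ}(S) ≤ λ(S) = μ_p S + μ_{id - p} S`.
-/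

open MeasureTheory Set

/-- The `η`-approximation `H¹_η(E)` of the one-dimensional Hausdorff measure: the infimum of
`Σᵢ diam Uᵢ` over all at most countable covers `{Uᵢ}` of `E` by sets of diameter at most `η`. -/
noncomputable def preHausdorff (η : ℝ) (E : Set ℝ) : ENNReal :=
  ⨅ (U : ℕ → Set ℝ) (_ : E ⊆ ⋃ i, U i)
      (_ : ∀ i, EMetric.diam (U i) ≤ ENNReal.ofReal η),
    ∑' i, EMetric.diam (U i)

theorem preHausdorff_le_volume {η : ℝ} (hη : 0 < η) (E : Set ℝ) :
    preHausdorff η E ≤ volume E := by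
  rw [← hausdorffMeasure_real, Measure.hausdorffMeasure_apply]
  refine le_iSup₂_of_le (ENNReal.ofReal η) (ENNReal.ofReal_pos.2 hη) <|
    le_iInf₂ fun U hEU => le_iInf fun hU =>
      (iInf₂_le_of_le U hEU (iInf_le _ hU)).trans_eq <| tsum_congr fun i => ?_
  rcases (U i).eq_empty_or_nonempty with hUi | hUi
  · simp only [hUi, Set.not_nonempty_empty, iSup_false]
    exact Metric.ediam_empty (X := ℝ)
  · rw [iSup_pos hUi, ENNReal.rpow_one]
    rfl

namespace StieltjesFunction

theorem measure_preimage_le_ediam (F : StieltjesFunction ℝ) (hF : Continuous F) (U : Set ℝ) :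
    F.measure (F ⁻¹' U) ≤ Metric.ediam U := by
  have hmeas : MeasurableSet (F ⁻¹' closure U) := (isClosed_closure.preimage hF).measurableSet
  calc F.measure (F ⁻¹' U) ≤ F.measure (F ⁻¹' closure U) :=
        measure_mono (preimage_mono subset_closure)
    _ = ⨆ (K) (_ : K ⊆ F ⁻¹' closure U) (_ : IsCompact K), F.measure K :=
        hmeas.measure_eq_iSup_isCompact _
    _ ≤ Metric.ediam (closure U) := by
        refine iSup₂_le fun K hKU => iSup_le fun hK => ?_
        rcases K.eq_empty_or_nonempty with rfl | hne
        · simp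
        calc F.measure K ≤ F.measure (Icc (sInf K) (sSup K)) :=
              measure_mono fun x hx => ⟨csInf_le hK.bddBelow hx, le_csSup hK.bddAbove hx⟩
          _ = ENNReal.ofReal (F (sSup K) - F (sInf K)) := by
              rw [F.measure_Icc, hF.continuousWithinAt.leftLim_eq]
          _ ≤ edist (F (sSup K)) (F (sInf K)) := by
              rw [edist_dist, Real.dist_eq]
              exact ENNReal.ofReal_le_ofReal (le_abs_self _)
          _ ≤ Metric.ediam (closure U) :=
              Metric.edist_le_ediam_of_mem (hKU (hK.sSup_mem hne)) (hKU (hK.sInf_mem hne))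
    _ = Metric.ediam U := Metric.ediam_closure U

theorem measure_preimage_le_preHausdorff (F : StieltjesFunction ℝ) (hF : Continuous F) (η : ℝ)
    (A : Set ℝ) : F.measure (F ⁻¹' A) ≤ preHausdorff η A := by
  refine le_iInf₂ fun U hAU => le_iInf fun _ => ?_
  calc F.measure (F ⁻¹' A) ≤ F.measure (⋃ i, F ⁻¹' U i) := by
        rw [← preimage_iUnion]
        exact measure_mono (preimage_mono hAU)
    _ ≤ ∑' i, F.measure (F ⁻¹' U i) := measure_iUnion_le _
    _ ≤ ∑' i, Metric.ediam (U i) :=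
        ENNReal.tsum_le_tsum fun i => F.measure_preimage_le_ediam hF (U i)

end StieltjesFunction

theorem lipschitzWith_one_of_monotone_of_monotone_sub_s15 {p : ℝ → ℝ} (hp : Monotone p)
    (hq : Monotone fun t => t - p t) : LipschitzWith 1 p := by
  refine LipschitzWith.of_le_add fun s t => ?_
  rcases le_total s t with hst | hts
  · linarith [hp hst, dist_nonneg (x := s) (y := t)]
  · have := hq hts
    rw [Real.dist_eq, abs_of_nonneg (sub_nonneg.2 hts)]
    dsimp only at this
    linarith

/-- The largest nondecreasing function of slope at most `1` that lies below `z.1` at `z.1 + z.2`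
for every `z ∈ S`. -/
noncomputable def chainSplit (S : Set (ℝ × ℝ)) (t : ℝ) : ℝ :=
  ⨅ z : S, ((z : ℝ × ℝ).1 + max (t - ((z : ℝ × ℝ).1 + (z : ℝ × ℝ).2)) 0)

section chainSplit

variable {S : Set (ℝ × ℝ)}

theorem le_chainSplit (hne : S.Nonempty) {c t : ℝ}
    (h : ∀ z ∈ S, c ≤ z.1 + max (t - (z.1 + z.2)) 0) : c ≤ chainSplit S t :=
  have : Nonempty S := hne.to_subtype
  le_ciInf fun z => h z z.2

variable (hS : IsChain (· ≤ ·) S)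
include hS

theorem chainSplit_le {z : ℝ × ℝ} (hz : z ∈ S) (t : ℝ) :
    chainSplit S t ≤ z.1 + max (t - (z.1 + z.2)) 0 := by
  refine ciInf_le ⟨min z.1 (t - z.2), ?_⟩ (⟨z, hz⟩ : S)
  rintro _ ⟨⟨w, hw⟩, rfl⟩
  rcases hS.total hz hw with ⟨h₁, -⟩ | ⟨-, h₂⟩
  · exact (min_le_left _ _).trans (h₁.trans (le_add_of_nonneg_right (le_max_right _ _)))
  · exact (min_le_right _ _).trans (by linarith [le_max_left (t - (w.1 + w.2)) 0])

theorem chainSplit_mono (hne : S.Nonempty) : Monotone (chainSplit S) := fun s t hst =>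
  le_chainSplit hne fun z hz => (chainSplit_le hS hz s).trans (by gcongr)

theorem chainSplit_le_add_sub (hne : S.Nonempty) {s t : ℝ} (hst : s ≤ t) :
    chainSplit S t ≤ chainSplit S s + (t - s) := by
  rw [← sub_le_iff_le_add]
  refine le_chainSplit hne fun z hz => ?_
  have hmax : max (t - (z.1 + z.2)) 0 ≤ max (s - (z.1 + z.2)) 0 + (t - s) :=
    max_le (by linarith [le_max_left (s - (z.1 + z.2)) 0])
      (by linarith [le_max_right (s - (z.1 + z.2)) 0])
  linarith [chainSplit_le hS hz t]

theorem chainSplit_add {z : ℝ × ℝ} (hz : z ∈ S) : chainSplit S (z.1 + z.2) = z.1 := by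
  refine le_antisymm ((chainSplit_le hS hz _).trans (by simp)) (le_chainSplit ⟨z, hz⟩ ?_)
  intro w hw
  rcases hS.total hz hw with ⟨h₁, -⟩ | ⟨-, h₂⟩
  · exact h₁.trans (le_add_of_nonneg_right (le_max_right _ _))
  · linarith [le_max_left (z.1 + z.2 - (w.1 + w.2)) 0]

theorem IsChain.exists_stieltjesFunction_add_eq_id :
    ∃ P Q : StieltjesFunction ℝ, Continuous P ∧ Continuous Q ∧ P + Q = StieltjesFunction.id ∧
      ∀ z ∈ S, P (z.1 + z.2) = z.1 ∧ Q (z.1 + z.2) = z.2 := by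
  rcases S.eq_empty_or_nonempty with rfl | hne
  · exact ⟨0, .id, continuous_const, continuous_id, zero_add _, by simp⟩
  have hp : Monotone (chainSplit S) := chainSplit_mono hS hne
  have hq : Monotone fun t => t - chainSplit S t := fun s t hst => by
    linarith [chainSplit_le_add_sub hS hne hst]
  have hpc : Continuous (chainSplit S) :=
    (lipschitzWith_one_of_monotone_of_monotone_sub_s15 hp hq).continuous
  have hqc : Continuous fun t => t - chainSplit S t := continuous_id.sub hpc
  refine ⟨⟨_, hp, fun _ => hpc.continuousWithinAt⟩, ⟨_, hq, fun _ => hqc.continuousWithinAt⟩,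
    hpc, hqc, StieltjesFunction.ext fun t => add_sub_cancel _ t, fun z hz => ?_⟩
  change chainSplit S _ = _ ∧ _ - chainSplit S _ = _
  rw [chainSplit_add hS hz]
  exact ⟨rfl, add_sub_cancel_left _ _⟩

end chainSplit

/-- If `f₁, f₂ : D → ℝ` are strictly increasing and `δ > 0`, then
`H¹_{2δ}((f₁ + f₂)(D)) ≤ H¹_δ(f₁(D)) + H¹_δ(f₂(D))`. -/
theorem stmt_15 (D : Set ℝ) (f₁ f₂ : ℝ → ℝ)
    (h₁ : StrictMonoOn f₁ D) (h₂ : StrictMonoOn f₂ D) (δ : ℝ) (hδ : 0 < δ) :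
    preHausdorff (2 * δ) ((fun x => f₁ x + f₂ x) '' D) ≤
      preHausdorff δ (f₁ '' D) + preHausdorff δ (f₂ '' D) := by
  have hchain : IsChain (· ≤ ·) (range fun x : D => (f₁ x, f₂ x)) :=
    Monotone.isChain_range fun x y hxy =>
      ⟨h₁.monotoneOn x.2 y.2 hxy, h₂.monotoneOn x.2 y.2 hxy⟩
  obtain ⟨P, Q, hP, hQ, hPQ, hsplit⟩ := hchain.exists_stieltjesFunction_add_eq_id
  set S := (fun x => f₁ x + f₂ x) '' D
  have hSP : S ⊆ P ⁻¹' (f₁ '' D) := by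
    rintro _ ⟨x, hx, rfl⟩
    exact ⟨x, hx, ((hsplit _ ⟨⟨x, hx⟩, rfl⟩).1).symm⟩
  have hSQ : S ⊆ Q ⁻¹' (f₂ '' D) := by
    rintro _ ⟨x, hx, rfl⟩
    exact ⟨x, hx, ((hsplit _ ⟨⟨x, hx⟩, rfl⟩).2).symm⟩
  calc preHausdorff (2 * δ) S ≤ volume S := preHausdorff_le_volume (by positivity) S
    _ = P.measure S + Q.measure S := by
        rw [Real.volume_eq_stieltjes_id, ← hPQ, StieltjesFunction.measure_add, Measure.add_apply]
    _ ≤ P.measure (P ⁻¹' (f₁ '' D)) + Q.measure (Q ⁻¹' (f₂ '' D)) :=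
        add_le_add (measure_mono hSP) (measure_mono hSQ)
    _ ≤ preHausdorff δ (f₁ '' D) + preHausdorff δ (f₂ '' D) :=
        add_le_add (P.measure_preimage_le_preHausdorff hP δ _)
          (Q.measure_preimage_le_preHausdorff hQ δ _)
end

section
/- There exists a set A ⊆ [0,1]^2 ⊆ ℝ^2 (Euclidean plane) with Hausdorff dimension equal to 2 such that both coordinate projections restricted to A are injective, i.e., no two distinct points of A share the same first coordinate and no two distinct points of A share the same second coordinate. -/
open MeasureTheory

/-!
A Sierpiński-type transfinite construction. Enumerate the continuum many Borel subsets of positive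
measure of `ℝ²` in order type `𝔠.ord`, and at each stage pick a point of the current set whose
coordinates differ from the coordinates of all (fewer than `𝔠`) previously chosen points; this is
possible by Fubini, because a Borel set of positive measure in `ℝ` has cardinality `𝔠`. The chosen
points have injective coordinate projections and meet every Borel set of positive measure, so their
trace on `[0,1]²` has full outer measure, hence positive `2`-dimensional Hausdorff measure.
-/

open Set Cardinal Function
open scoped ENNReal NNReal

universe u

theorem MeasurableSet.mk_eq_continuum_of_not_countable {α : Type*} [MeasurableSpace α]
    [StandardBorelSpace α] {s : Set α} (hs : MeasurableSet s) (h : ¬s.Countable) : #s = 𝔠 := by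
  have := hs.standardBorel
  have e := PolishSpace.measurableEquivNatBoolOfNotCountable (α := s) (by rwa [countable_coe_iff])
  simpa using Cardinal.lift_mk_eq'.2 ⟨e.toEquiv⟩

theorem MeasureTheory.Measure.exists_mem_notMem_of_measure_ne_zero {α : Type*}
    [MeasurableSpace α] [StandardBorelSpace α] {μ : Measure α} [NullSingletonClass μ]
    {s X : Set α} (hs : MeasurableSet s) (hμs : μ s ≠ 0) (hX : #X < 𝔠) : ∃ x ∈ s, x ∉ X := by
  by_contra! hsX
  have hs_unc : ¬s.Countable := fun hc => hμs (hc.measure_zero μ)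
  exact hX.not_ge ((hs.mk_eq_continuum_of_not_countable hs_unc).ge.trans (mk_le_mk_of_subset hsX))

theorem MeasureTheory.Measure.exists_mem_fst_notMem_snd_notMem {α β : Type*}
    [MeasurableSpace α] [StandardBorelSpace α] [MeasurableSpace β] [StandardBorelSpace β]
    {μ : Measure α} {ν : Measure β} [NullSingletonClass μ] [NullSingletonClass ν] [SFinite ν]
    {C : Set (α × β)} (hC : MeasurableSet C) (hμνC : μ.prod ν C ≠ 0)
    {X : Set α} {Y : Set β} (hX : #X < 𝔠) (hY : #Y < 𝔠) :
    ∃ p ∈ C, p.1 ∉ X ∧ p.2 ∉ Y := by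
  have hslices : MeasurableSet {x | ν (Prod.mk x ⁻¹' C) ≠ 0} :=
    measurable_measure_prodMk_left hC (measurableSet_singleton 0).compl
  have hslices_ne : μ {x | ν (Prod.mk x ⁻¹' C) ≠ 0} ≠ 0 := fun h =>
    hμνC <| Measure.measure_prod_null_of_ae_null hC <|
      (measure_eq_zero_iff_ae_notMem.1 h).mono fun x hx => by simpa using hx
  obtain ⟨x, hxC, hxX⟩ := exists_mem_notMem_of_measure_ne_zero hslices hslices_ne hX
  obtain ⟨y, hyC, hyY⟩ :=
    exists_mem_notMem_of_measure_ne_zero (measurable_prodMk_left hC) hxC hY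
  exact ⟨(x, y), hyC, hxX, hyY⟩

theorem exists_injOn_fst_injOn_snd_forall_inter_nonempty {α β : Type u} (κ : Cardinal.{u})
    (𝒞 : Set (Set (α × β))) (h𝒞 : #𝒞 ≤ κ)
    (hfree : ∀ C ∈ 𝒞, ∀ (X : Set α) (Y : Set β), #X < κ → #Y < κ → ∃ p ∈ C, p.1 ∉ X ∧ p.2 ∉ Y) :
    ∃ A : Set (α × β), InjOn Prod.fst A ∧ InjOn Prod.snd A ∧ ∀ C ∈ 𝒞, (A ∩ C).Nonempty := by
  let I := (#𝒞).ord.ToType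
  obtain ⟨e⟩ : Nonempty (I ≃ 𝒞) := Cardinal.eq.1 (mk_ord_toType _)
  have hIio (i : I) : #(Iio i) < κ :=
    (mk_Iio_lt i (by rw [mk_ord_toType, Ordinal.type_toType])).trans_le (by rwa [mk_ord_toType])
  have step (i : I) (prev : ∀ j < i, α × β) : ∃ p ∈ (e i : Set (α × β)),
      p.1 ∉ range (fun j : Iio i => (prev j j.2).1) ∧
      p.2 ∉ range (fun j : Iio i => (prev j j.2).2) :=
    hfree _ (e i).2 _ _ (mk_range_le.trans_lt (hIio i)) (mk_range_le.trans_lt (hIio i))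
  choose pick hpick using step
  let f : I → α × β := WellFoundedLT.fix pick
  have hf (i : I) : f i ∈ (e i : Set (α × β)) ∧
      ∀ j < i, (f j).1 ≠ (f i).1 ∧ (f j).2 ≠ (f i).2 := by
    have hfix : f i = pick i (fun j _ => f j) := WellFoundedLT.fix_eq pick i
    have := hpick i (fun j _ => f j)
    rw [← hfix] at this
    exact ⟨this.1, fun j hj => ⟨fun h => this.2.1 ⟨⟨j, hj⟩, h⟩, fun h => this.2.2 ⟨⟨j, hj⟩, h⟩⟩⟩
  refine ⟨range f, ?_, ?_, fun C hC => ?_⟩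
  · exact (Injective.of_lt_imp_ne fun j i hji => ((hf i).2 j hji).1).injOn_range
  · exact (Injective.of_lt_imp_ne fun j i hji => ((hf i).2 j hji).2).injOn_range
  · obtain ⟨i, hi⟩ := e.surjective ⟨C, hC⟩
    exact ⟨f i, mem_range_self i, by simpa [hi] using (hf i).1⟩

theorem MeasurableSpace.cardinal_measurableSet_le_continuum_of_secondCountable {α : Type*}
    [TopologicalSpace α] [SecondCountableTopology α] [MeasurableSpace α] [BorelSpace α] :
    #{s : Set α | MeasurableSet s} ≤ 𝔠 := by
  obtain ⟨b, hbc, -, hb⟩ := TopologicalSpace.exists_countable_basis α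
  rw [BorelSpace.measurable_eq (α := α), hb.borel_eq_generateFrom]
  exact cardinal_measurableSet_le_continuum
    ((mk_le_aleph0_iff.2 hbc.to_subtype).trans aleph0_le_continuum)

theorem MeasureTheory.measure_inter_eq_of_forall_inter_nonempty {α : Type*} [MeasurableSpace α]
    {μ : Measure α} {A S : Set α} (hS : MeasurableSet S)
    (hA : ∀ C, MeasurableSet C → μ C ≠ 0 → (A ∩ C).Nonempty) : μ (A ∩ S) = μ S := by
  set T := toMeasurable μ (A ∩ S)
  have hST : μ (S \ T) = 0 := by
    by_contra h
    obtain ⟨a, haA, haS, haT⟩ := hA _ (hS.diff (measurableSet_toMeasurable _ _)) h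
    exact haT (subset_toMeasurable _ _ ⟨haA, haS⟩)
  refine (measure_mono inter_subset_right).antisymm ?_
  calc μ S ≤ μ (S ∩ T) + μ (S \ T) := measure_le_inter_add_sdiff μ S T
    _ ≤ μ T := by rw [hST, add_zero]; exact measure_mono inter_subset_right
    _ = μ (A ∩ S) := measure_toMeasurable _

theorem Real.dimH_of_volume_ne_zero {ι : Type*} [Fintype ι] {s : Set (ι → ℝ)}
    (hs : volume s ≠ 0) : dimH s = Fintype.card ι := by
  refine (dimH_mono (subset_univ s)).trans_eq (Real.dimH_univ_pi ι) |>.antisymm ?_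
  have h : μH[(Fintype.card ι : ℝ≥0)] s ≠ 0 := by
    rwa [NNReal.coe_natCast, hausdorffMeasure_pi_real]
  exact_mod_cast le_dimH_of_hausdorffMeasure_ne_zero h

theorem EuclideanSpace.dimH_of_volume_ne_zero {ι : Type*} [Fintype ι]
    {s : Set (EuclideanSpace ℝ ι)} (hs : volume s ≠ 0) : dimH s = Fintype.card ι := by
  rw [← (PiLp.continuousLinearEquiv 2 ℝ (fun _ : ι => ℝ)).symm.dimH_preimage]
  apply Real.dimH_of_volume_ne_zero
  rwa [← (EuclideanSpace.volume_preserving_symm_measurableEquiv_toLp ι).symm.measure_preimage_equiv]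
    at hs

/-- There is a set `A ⊆ [0,1]² ⊆ ℝ²` (Euclidean plane) of Hausdorff dimension `2` such that
both coordinate projections restricted to `A` are injective. -/
theorem stmt_17 :
    ∃ A : Set (EuclideanSpace ℝ (Fin 2)),
      (∀ x ∈ A, ∀ i : Fin 2, x i ∈ Set.Icc (0 : ℝ) 1) ∧
      dimH A = 2 ∧
      ∀ i : Fin 2, Set.InjOn (fun x : EuclideanSpace ℝ (Fin 2) => x i) A := by
  obtain ⟨A₀, hfst, hsnd, hmeets⟩ := exists_injOn_fst_injOn_snd_forall_inter_nonempty 𝔠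
    {C : Set (ℝ × ℝ) | MeasurableSet C ∧ volume C ≠ 0}
    ((mk_le_mk_of_subset fun _ hC => hC.1).trans
      MeasurableSpace.cardinal_measurableSet_le_continuum_of_secondCountable)
    (fun C hC _ _ hX hY => Measure.exists_mem_fst_notMem_snd_notMem hC.1
      (by rw [← Measure.volume_eq_prod]; exact hC.2) hX hY)
  let S : Set (ℝ × ℝ) := Icc 0 1 ×ˢ Icc 0 1
  let Φ : EuclideanSpace ℝ (Fin 2) ≃ᵐ ℝ × ℝ :=
    (MeasurableEquiv.toLp 2 (Fin 2 → ℝ)).symm.trans MeasurableEquiv.finTwoArrow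
  have hΦ : MeasurePreserving Φ :=
    (EuclideanSpace.volume_preserving_symm_measurableEquiv_toLp _).trans
      (volume_preserving_finTwoArrow ℝ)
  have hvol : volume (Φ ⁻¹' (A₀ ∩ S)) = 1 := by
    rw [hΦ.measure_preimage_equiv, measure_inter_eq_of_forall_inter_nonempty
      (measurableSet_Icc.prod measurableSet_Icc) fun C hC h => hmeets C ⟨hC, h⟩,
      Measure.volume_eq_prod, Measure.prod_prod, Real.volume_Icc]
    norm_num
  refine ⟨Φ ⁻¹' (A₀ ∩ S), fun x hx i => ?_, ?_, fun i => ?_⟩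
  · fin_cases i
    exacts [hx.2.1, hx.2.2]
  · rw [EuclideanSpace.dimH_of_volume_ne_zero (hvol ▸ one_ne_zero), Fintype.card_fin]
    rfl
  · fin_cases i
    exacts [fun x hx y hy h => Φ.injective (hfst hx.1 hy.1 h),
      fun x hx y hy h => Φ.injective (hsnd hx.1 hy.1 h)]
end
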